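/- arXiv:1004.4777 — 6 statements merged into one kernel-verified Lean document; each statement's English description precedes it below -/
import Mathlib

section
/- A class of graphs has bounded n-depth tree-width for some n if and only if it excludes some path as a subgraph. -/
open scoped Classical

/-- A tree domain: a (finite) prefix-closed set of finite sequences. -/
def PrefixClosed (T : Finset (List ℕ)) : Prop :=
  ∀ x ∈ T, ∀ y : List ℕ, y <+: x → y ∈ T

/-- A set of nodes of a tree domain is connected in the tree iff it has a root `r`
below all its members such that all nodes between `r` and a member are members. -/
def ConnectedIn (S : Set (List ℕ)) : Prop :=
  ∃ r ∈ S, ∀ v ∈ S, r <+: v ∧ ∀ u : List ℕ, r <+: u → u <+: v → u ∈ S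

/-- A tree decomposition of a graph `G`. -/
structure IsTreeDecomp {V : Type*} (G : SimpleGraph V)
    (T : Finset (List ℕ)) (bag : List ℕ → Finset V) : Prop where
  prefix_closed : PrefixClosed T
  vertex_conn : ∀ a : V, ConnectedIn {v | v ∈ T ∧ a ∈ bag v}
  edge_cover : ∀ a b : V, G.Adj a b → ∃ v ∈ T, a ∈ bag v ∧ b ∈ bag v

/-- `G` contains a simple path with `l` edges (equivalently, the path of length `l`
is a subgraph of `G`). -/
def HasPathOfLength {V : Type*} (G : SimpleGraph V) (l : ℕ) : Prop :=
  ∃ (u v : V) (p : G.Walk u v), p.IsPath ∧ p.length = l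

/-!
If `G` has a tree decomposition of height `< n` and width `≤ k`, send each vertex of a path to
the topmost node whose bag contains it. Consecutive vertices go to comparable nodes and every node
receives at most `k + 1` vertices; cutting the resulting sequence at the occurrences of the root and
recursing into the subtrees bounds its length by `(k + 2) ^ n - 1`.

Conversely, if `G` has no path with `l` edges, a normal (depth-first) spanning forest of `G` has
depth at most `l`. Every edge joins comparable vertices of such a forest, so the root paths of the
forest, used both as nodes and as bags, form a tree decomposition of height and width at most `l`.
-/

namespace List

variable {α : Type*}

theorem exists_concat_prefix_of_prefix_of_ne {u x : List α} (hux : u <+: x) (hne : x ≠ u) :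
    ∃ c, u ++ [c] <+: x := by
  obtain ⟨_ | ⟨c, t⟩, rfl⟩ := hux
  · simp at hne
  · exact ⟨c, t, by simp⟩

theorem prefix_of_getLast?_eq_of_mem {l l₁ l₂ : List α} {a : α} (hl : l.Nodup)
    (h₁ : l₁ <+: l) (h₂ : l₂ <+: l) (ha : l₁.getLast? = some a) (ha₂ : a ∈ l₂) : l₁ <+: l₂ := by
  rcases prefix_or_prefix_of_prefix h₁ h₂ with h | h
  · exact h
  obtain ⟨m, rfl⟩ := getLast?_eq_some_iff.mp ha
  rcases prefix_concat_iff.mp h with rfl | hm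
  · exact prefix_rfl
  obtain ⟨r, rfl⟩ := h₁
  have := (nodup_append.mp hl).1
  simp only [nodup_append, mem_singleton] at this
  exact absurd rfl (this.2.2 a (hm.subset ha₂) a rfl)

theorem IsChain.concat_prefix_of_comparable {u : List α} {c : α} :
    ∀ {a : List α} {L : List (List α)},
      (a :: L).IsChain (fun x y => x <+: y ∨ y <+: x) → (∀ x ∈ a :: L, u <+: x ∧ x ≠ u) →
      u ++ [c] <+: a → ∀ x ∈ a :: L, u ++ [c] <+: x
  | a, [], _, _, ha, x, hx => by rwa [mem_singleton.mp hx]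
  | a, b :: L, hL, hu, ha, x, hx => by
    have hb : u ++ [c] <+: b := by
      rcases isChain_cons_cons.mp hL |>.1 with hab | hba
      · exact ha.trans hab
      · obtain ⟨hub, hbu⟩ := hu b (by simp)
        obtain ⟨c', hc'⟩ := exists_concat_prefix_of_prefix_of_ne hub hbu
        have hc : u ++ [c'] = u ++ [c] :=
          (prefix_of_prefix_length_le (hc'.trans hba) ha (by simp)).eq_of_length (by simp)
        simpa using hc ▸ hc'
    rcases mem_cons.mp hx with rfl | hx
    · exact ha
    · exact (isChain_cons_cons.mp hL).2.concat_prefix_of_comparable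
        (fun y hy => hu y (mem_cons_of_mem a hy)) hb x hx

theorem length_lt_pow_of_isChain_comparable [DecidableEq α] (k : ℕ) :
    ∀ (s : ℕ) (u : List α) (L : List (List α)),
      L.IsChain (fun x y => x <+: y ∨ y <+: x) → (∀ x ∈ L, u <+: x ∧ x.length < u.length + s) →
      (∀ w, L.count w ≤ k + 1) → L.length < (k + 2) ^ s
  | 0, u, L, _, hu, _ => by
    cases L with
    | nil => simp
    | cons a L => have := (hu a (by simp)).1.length_le; have := (hu a (by simp)).2; omega
  | s + 1, u, L, hL, hu, hcount => by
    -- Cutting `L` at its occurrences of `u` leaves blocks below a single child of `u`.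
    have key : ∀ L : List (List α), L.IsChain (fun x y => x <+: y ∨ y <+: x) →
        (∀ x ∈ L, u <+: x ∧ x.length < u.length + (s + 1)) → (∀ w, L.count w ≤ k + 1) →
        L.length + 1 ≤ (L.count u + 1) * (k + 2) ^ s := by
      intro L
      induction h : L.length using Nat.strong_induction_on generalizing L with
      | _ n ih =>
      intro hL hu hcount
      subst h
      by_cases huL : u ∈ L
      · obtain ⟨B, R, rfl⟩ := append_of_mem huL
        have hB := ih B.length (by simp) B rfl hL.left_of_append (fun x hx => hu x (by simp [hx]))
          fun w => ((sublist_append_left B _).count_le w).trans (hcount w)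
        have hR := ih R.length (by simp; omega) R rfl hL.right_of_append.tail
          (fun x hx => hu x (by simp [hx]))
          fun w => (((sublist_cons_self u R).trans (sublist_append_right B _)).count_le w).trans
            (hcount w)
        simp only [count_append, count_cons_self, length_append, length_cons]
        nlinarith
      · cases L with
        | nil => simpa using Nat.one_le_pow _ _ (by omega)
        | cons a L' =>
        have hstrict : ∀ x ∈ a :: L', u <+: x ∧ x ≠ u :=
          fun x hx => ⟨(hu x hx).1, fun h => huL (h ▸ hx)⟩
        obtain ⟨hua, hau⟩ := hstrict a (by simp)
        obtain ⟨c, hc⟩ := exists_concat_prefix_of_prefix_of_ne hua hau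
        have := length_lt_pow_of_isChain_comparable k s (u ++ [c]) (a :: L') hL
          (fun x hx => ⟨hL.concat_prefix_of_comparable hstrict hc x hx, by
            have := (hu x hx).2; simp; omega⟩) hcount
        rw [count_eq_zero.mpr huL]
        omega
    calc L.length < (L.count u + 1) * (k + 2) ^ s := key L hL hu hcount
      _ ≤ (k + 2) * (k + 2) ^ s := Nat.mul_le_mul_right _ (by have := hcount u; omega)
      _ = (k + 2) ^ (s + 1) := by ring

end List

theorem IsTreeDecomp.not_hasPathOfLength {V : Type*} {G : SimpleGraph V} {T : Finset (List ℕ)}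
    {bag : List ℕ → Finset V} {n k : ℕ} (hTD : IsTreeDecomp G T bag)
    (hdepth : ∀ x ∈ T, x.length < n) (hwidth : ∀ x ∈ T, (bag x).card ≤ k + 1) :
    ¬ HasPathOfLength G ((k + 2) ^ n) := by
  rintro ⟨u, v, p, hp, hlen⟩
  -- `top a` is the node of `T` closest to the root whose bag contains `a`.
  choose top htop htop_le using hTD.vertex_conn
  have hcount : ∀ w, (p.support.map top).count w ≤ k + 1 := by
    intro w
    by_cases hw : w ∈ T
    · rw [List.count_eq_countP, List.countP_map, List.countP_eq_length_filter]
      have hnd : (p.support.filter ((· == w) ∘ top)).Nodup := hp.support_nodup.filter _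
      rw [← List.toFinset_card_of_nodup hnd]
      refine (Finset.card_le_card fun a ha => ?_).trans (hwidth w hw)
      simp only [List.mem_toFinset, List.mem_filter, Function.comp_apply, beq_iff_eq] at ha
      exact ha.2 ▸ (htop a).2
    · rw [List.count_eq_zero.mpr fun hw' => ?_]
      · omega
      obtain ⟨a, -, rfl⟩ := List.mem_map.mp hw'
      exact hw (htop a).1
  have := List.length_lt_pow_of_isChain_comparable k n [] (p.support.map top)
    ((List.isChain_map top).mpr (p.isChain_adj_support.imp fun a b hab => by
      obtain ⟨x, hxT, hax, hbx⟩ := hTD.edge_cover a b hab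
      exact List.prefix_or_prefix_of_prefix (htop_le a x ⟨hxT, hax⟩).1 (htop_le b x ⟨hxT, hbx⟩).1))
    (by simpa using fun a _ => hdepth _ (htop a).1) hcount
  simp [hlen] at this

section PathForest

variable {V : Type*} (G : SimpleGraph V)

/-- `σ v` is the path from the root of its tree down to `v` in a rooted spanning forest of `G`. -/
structure IsPathForest (σ : V → List V) : Prop where
  getLast?_eq : ∀ v, (σ v).getLast? = some v
  isChain : ∀ v, (σ v).IsChain G.Adj
  nodup : ∀ v, (σ v).Nodup
  prefix_of_mem : ∀ v, ∀ w ∈ σ v, σ w <+: σ v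

/-- A normal (Trémaux) spanning forest. -/
structure IsNormalPathForest (σ : V → List V) : Prop extends IsPathForest G σ where
  comparable_of_adj : ∀ u v, G.Adj u v → σ u <+: σ v ∨ σ v <+: σ u

variable {G}

theorem isPathForest_singleton : IsPathForest G fun v => [v] where
  getLast?_eq _ := rfl
  isChain _ := List.isChain_singleton _
  nodup _ := List.nodup_singleton _
  prefix_of_mem v w hw := by rw [List.mem_singleton.mp hw]

theorem IsPathForest.exists_eq_append_of_mem {σ : V → List V} (hσ : IsPathForest G σ)
    {v w x : V} {t : List V} (ht : σ w = σ v ++ t) (hx : x ∈ v :: t) :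
    ∃ t', t' <+: t ∧ σ x = σ v ++ t' := by
  have hxw : x ∈ σ w := by
    rw [ht]
    rcases List.mem_cons.mp hx with rfl | hxt
    · exact List.mem_append_left _ (List.mem_of_getLast? (hσ.getLast?_eq x))
    · exact List.mem_append_right _ hxt
  have hxw' := hσ.prefix_of_mem w x hxw
  rcases List.prefix_or_prefix_of_prefix hxw' (ht ▸ List.prefix_append _ _) with hxv | ⟨t', ht'⟩
  · rcases List.mem_cons.mp hx with rfl | hxt
    · exact ⟨[], List.nil_prefix, by simp⟩
    · have hxv' : x ∈ σ v := hxv.subset (List.mem_of_getLast? (hσ.getLast?_eq x))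
      exact absurd rfl ((List.nodup_append.mp (ht ▸ hσ.nodup w)).2.2 x hxv' x hxt)
  · rw [← ht', ht, List.prefix_append_right_inj] at hxw'
    exact ⟨t', hxw', ht'.symm⟩

/-- Move the subtree rooted at `v` so that it hangs below `u`. -/
noncomputable def rehang (σ : V → List V) (u v : V) (w : V) : List V :=
  if σ v <+: σ w then σ u ++ v :: (σ w).drop (σ v).length else σ w

theorem rehang_of_not_prefix {σ : V → List V} {u v w : V} (h : ¬ σ v <+: σ w) :
    rehang σ u v w = σ w :=
  if_neg h

theorem rehang_of_eq_append {σ : V → List V} {u v w : V} {t : List V} (h : σ w = σ v ++ t) :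
    rehang σ u v w = σ u ++ v :: t := by
  simp [rehang, h]

theorem IsPathForest.prefix_of_mem_rehang {σ : V → List V} (hσ : IsPathForest G σ) {u v : V}
    (hvu : ¬ σ v <+: σ u) (w : V) : ∀ x ∈ rehang σ u v w, rehang σ u v x <+: rehang σ u v w := by
  have fixed : ∀ x y, σ x <+: σ y → ¬ σ v <+: σ y → rehang σ u v x = σ x :=
    fun x y hxy hy => rehang_of_not_prefix fun h => hy (h.trans hxy)
  intro x hx
  by_cases hvw : σ v <+: σ w
  · obtain ⟨t, ht⟩ := hvw
    rw [rehang_of_eq_append ht.symm] at hx ⊢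
    rcases List.mem_append.mp hx with hxu | hxt
    · rw [fixed x u (hσ.prefix_of_mem u x hxu) hvu]
      exact (hσ.prefix_of_mem u x hxu).trans (List.prefix_append _ _)
    · obtain ⟨t', ht', hx'⟩ := hσ.exists_eq_append_of_mem ht.symm hxt
      rw [rehang_of_eq_append hx', List.prefix_append_right_inj, List.prefix_cons_inj]
      exact ht'
  · rw [rehang_of_not_prefix hvw] at hx ⊢
    rw [fixed x w (hσ.prefix_of_mem w x hx) hvw]
    exact hσ.prefix_of_mem w x hx

theorem IsPathForest.rehang {σ : V → List V} (hσ : IsPathForest G σ) {u v : V} (huv : G.Adj u v)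
    (hvu : ¬ σ v <+: σ u) : IsPathForest G (_root_.rehang σ u v) := by
  obtain ⟨p, hp⟩ := List.getLast?_eq_some_iff.mp (hσ.getLast?_eq v)
  have split : ∀ w t, σ w = σ v ++ t → σ w = p ++ v :: t := fun w t ht => by simp [ht, hp]
  refine ⟨fun w => ?_, fun w => ?_, fun w => ?_, hσ.prefix_of_mem_rehang hvu⟩ <;>
    by_cases hvw : σ v <+: σ w
  · obtain ⟨t, ht⟩ := hvw
    have := hσ.getLast?_eq w
    rw [rehang_of_eq_append ht.symm]
    rw [split w t ht.symm] at this
    simpa [List.getLast?_append] using this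
  · rw [rehang_of_not_prefix hvw]
    exact hσ.getLast?_eq w
  · obtain ⟨t, ht⟩ := hvw
    have hvt : (v :: t).IsChain G.Adj := (split w t ht.symm ▸ hσ.isChain w).right_of_append
    rw [rehang_of_eq_append ht.symm]
    refine List.isChain_append.mpr ⟨hσ.isChain u, hvt, ?_⟩
    simp only [hσ.getLast?_eq u, Option.mem_def, Option.some.injEq, List.head?_cons]
    rintro _ rfl _ rfl
    exact huv
  · rw [rehang_of_not_prefix hvw]
    exact hσ.isChain w
  · obtain ⟨t, ht⟩ := hvw
    have hvt : (v :: t).Nodup := (split w t ht.symm ▸ hσ.nodup w).of_append_right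
    rw [rehang_of_eq_append ht.symm]
    refine List.nodup_append.mpr ⟨hσ.nodup u, hvt, fun x hxu y hy hxy => ?_⟩
    obtain ⟨t', -, hx'⟩ := hσ.exists_eq_append_of_mem ht.symm (hxy ▸ hy)
    exact hvu ((hx' ▸ List.prefix_append _ _).trans (hσ.prefix_of_mem u x hxu))
  · rw [rehang_of_not_prefix hvw]
    exact hσ.nodup w

theorem sum_length_lt_sum_length_rehang [Fintype V] {σ : V → List V} {u v : V}
    (hle : (σ v).length ≤ (σ u).length) :
    ∑ w, (σ w).length < ∑ w, (rehang σ u v w).length := by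
  refine Finset.sum_lt_sum (fun w _ => ?_) ⟨v, Finset.mem_univ v, by simp [rehang]; omega⟩
  unfold rehang
  split_ifs with hvw
  · have := hvw.length_le
    simp only [List.length_append, List.length_cons, List.length_drop]
    omega
  · exact le_rfl

variable (G) in
/-- A spanning forest maximising the total depth is normal: an edge between incomparable
vertices would let us rehang the shallower end below the deeper one. -/
theorem exists_isNormalPathForest [Fintype V] : ∃ σ, IsNormalPathForest G σ := by
  let S : Set ℕ := {m | ∃ σ, IsPathForest G σ ∧ ∑ w, (σ w).length = m}
  have hbdd : BddAbove S := by
    refine ⟨Fintype.card V * Fintype.card V, ?_⟩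
    rintro _ ⟨σ, hσ, rfl⟩
    calc ∑ w, (σ w).length ≤ ∑ _w : V, Fintype.card V :=
          Finset.sum_le_sum fun w _ => (hσ.nodup w).length_le_card
      _ = Fintype.card V * Fintype.card V := by simp
  obtain ⟨σ, hσ, hmax⟩ := Nat.sSup_mem (s := S) ⟨_, _, isPathForest_singleton, rfl⟩ hbdd
  have no_rehang : ∀ u v, G.Adj u v → ¬ σ v <+: σ u → (σ u).length < (σ v).length := by
    intro u v huv hvu
    by_contra! hle
    exact (sum_length_lt_sum_length_rehang hle).not_ge
      (hmax ▸ le_csSup hbdd ⟨_, hσ.rehang huv hvu, rfl⟩)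
  refine ⟨σ, hσ, fun u v huv => ?_⟩
  by_contra! h
  have := no_rehang u v huv h.2
  have := no_rehang v u huv.symm h.1
  omega

end PathForest

section Decomposition

open Encodable

variable {V : Type*} [Fintype V] [Encodable V]

noncomputable def forestNodes (σ : V → List V) : Finset (List ℕ) :=
  Finset.univ.biUnion fun v => ((σ v).map encode).inits.toFinset

noncomputable def encodeBag (x : List ℕ) : Finset V :=
  Finset.univ.filter fun a => encode a ∈ x

theorem mem_forestNodes {σ : V → List V} {x : List ℕ} :
    x ∈ forestNodes σ ↔ ∃ v, x <+: (σ v).map encode := by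
  simp [forestNodes]

theorem mem_encodeBag {x : List ℕ} {a : V} : a ∈ encodeBag x ↔ encode a ∈ x := by
  simp [encodeBag]

theorem card_encodeBag_le (x : List ℕ) : (encodeBag x : Finset V).card ≤ x.length :=
  calc (encodeBag x : Finset V).card ≤ x.toFinset.card :=
        Finset.card_le_card_of_injOn encode (fun a ha => by simpa [mem_encodeBag] using ha)
          encode_injective.injOn
    _ ≤ x.length := List.toFinset_card_le x

theorem IsNormalPathForest.isTreeDecomp {G : SimpleGraph V} {σ : V → List V}
    (hσ : IsNormalPathForest G σ) : IsTreeDecomp G (forestNodes σ) encodeBag := by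
  have self_mem : ∀ a, a ∈ σ a := fun a => List.mem_of_getLast? (hσ.getLast?_eq a)
  have root_mem : ∀ v, (σ v).map encode ∈ forestNodes σ :=
    fun v => mem_forestNodes.mpr ⟨v, List.prefix_rfl⟩
  refine ⟨fun x hx y hyx => ?_, fun a => ?_, fun a b hab => ?_⟩
  · obtain ⟨v, hxv⟩ := mem_forestNodes.mp hx
    exact mem_forestNodes.mpr ⟨v, hyx.trans hxv⟩
  · have hlast : ((σ a).map encode).getLast? = some (encode a) := by
      simp [List.getLast?_map, hσ.getLast?_eq a]
    refine ⟨(σ a).map encode, ⟨root_mem a, mem_encodeBag.mpr (List.mem_map_of_mem (self_mem a))⟩,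
      fun x ⟨hx, hax⟩ => ?_⟩
    obtain ⟨v, hxv⟩ := mem_forestNodes.mp hx
    have hav : a ∈ σ v :=
      (List.mem_map_of_injective encode_injective).mp (hxv.subset (mem_encodeBag.mp hax))
    have hroot : (σ a).map encode <+: x :=
      List.prefix_of_getLast?_eq_of_mem ((hσ.nodup v).map encode_injective)
        ((hσ.prefix_of_mem v a hav).map encode) hxv hlast (mem_encodeBag.mp hax)
    exact ⟨hroot, fun y hay hyx => ⟨mem_forestNodes.mpr ⟨v, hyx.trans hxv⟩,
      mem_encodeBag.mpr (hay.subset (List.mem_of_getLast? hlast))⟩⟩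
  · have cover : ∀ a b, σ a <+: σ b →
        ∃ x ∈ forestNodes σ, a ∈ encodeBag x ∧ b ∈ encodeBag x := fun a b hab =>
      ⟨_, root_mem b, mem_encodeBag.mpr (List.mem_map_of_mem (hab.subset (self_mem a))),
        mem_encodeBag.mpr (List.mem_map_of_mem (self_mem b))⟩
    rcases hσ.comparable_of_adj a b hab with h | h
    · exact cover a b h
    · obtain ⟨x, hx, hb, ha⟩ := cover b a h
      exact ⟨x, hx, ha, hb⟩

end Decomposition

theorem length_le_of_not_hasPathOfLength {V : Type*} {G : SimpleGraph V} {l : ℕ}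
    (hG : ¬ HasPathOfLength G l) {L : List V} (hL : L.IsChain G.Adj) (hnd : L.Nodup) :
    L.length ≤ l := by
  by_contra! h
  have hne : L.take (l + 1) ≠ [] := List.ne_nil_of_length_pos (by simp; omega)
  refine hG ⟨_, _, SimpleGraph.Walk.ofSupport _ hne (hL.take _), ?_, ?_⟩
  · rw [SimpleGraph.Walk.isPath_def, SimpleGraph.Walk.support_ofSupport]
    exact hnd.sublist (List.take_sublist _ _)
  · simp only [SimpleGraph.Walk.length_ofSupport, List.length_take]
    omega

theorem exists_isTreeDecomp_of_not_hasPathOfLength {V : Type*} [Fintype V] [Encodable V]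
    {G : SimpleGraph V} {l : ℕ} (hG : ¬ HasPathOfLength G l) :
    ∃ (T : Finset (List ℕ)) (bag : List ℕ → Finset V),
      IsTreeDecomp G T bag ∧ (∀ x ∈ T, x.length ≤ l) ∧ ∀ x ∈ T, (bag x).card ≤ l := by
  obtain ⟨σ, hσ⟩ := exists_isNormalPathForest G
  have hdepth : ∀ x ∈ forestNodes σ, x.length ≤ l := fun x hx => by
    obtain ⟨v, hxv⟩ := mem_forestNodes.mp hx
    calc x.length ≤ (σ v).length := by simpa using hxv.length_le
      _ ≤ l := length_le_of_not_hasPathOfLength hG (hσ.isChain v) (hσ.nodup v)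
  exact ⟨_, _, hσ.isTreeDecomp, hdepth, fun x hx => (card_encodeBag_le x).trans (hdepth x hx)⟩

/-- A class of finite graphs has bounded `n`-depth tree-width for some
`n` if and only if it excludes some path as a subgraph. -/
theorem stmt_5 (C : Set (Σ n : ℕ, SimpleGraph (Fin n))) :
    (∃ n k : ℕ, ∀ G ∈ C, ∃ (T : Finset (List ℕ)) (bag : List ℕ → Finset (Fin G.1)),
        IsTreeDecomp G.2 T bag ∧ (∀ x ∈ T, x.length < n) ∧
        ∀ x ∈ T, (bag x).card ≤ k + 1)
    ↔ (∃ l : ℕ, ∀ G ∈ C, ¬ HasPathOfLength G.2 l) := by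
  constructor
  · rintro ⟨n, k, h⟩
    refine ⟨(k + 2) ^ n, fun G hG => ?_⟩
    obtain ⟨T, bag, hTD, hdepth, hwidth⟩ := h G hG
    exact hTD.not_hasPathOfLength hdepth hwidth
  · rintro ⟨l, h⟩
    refine ⟨l + 1, l, fun G hG => ?_⟩
    obtain ⟨T, bag, hTD, hdepth, hwidth⟩ := exists_isTreeDecomp_of_not_hasPathOfLength (h G hG)
    exact ⟨T, bag, hTD, fun x hx => Nat.lt_succ_of_le (hdepth x hx),
      fun x hx => (hwidth x hx).trans (Nat.le_succ l)⟩
end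

section
/- For every graph G and every n ∈ ℕ, the path-width of G satisfies pwd(G) < n·(twd_n(G) + 1). -/
/-!
Enumerate the nodes of a tree decomposition of height `< n` in lexicographic, i.e. depth-first,
order `z₀ < z₁ < ⋯` and give the `i`-th node of a path the union of the bags of all ancestors
of `zᵢ`: at most `n` bags of size at most `k + 1`. Every subtree occupies a contiguous block of
the depth-first order, so the path nodes whose bag contains a vertex `a` form an interval, which
begins at the root of the subtree of nodes whose bags contain `a`.
-/

open scoped Classical

/-- A tree domain is a path if its nodes are linearly ordered by the prefix relation. -/
def IsPathDomain (T : Finset (List ℕ)) : Prop :=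
  ∀ u ∈ T, ∀ v ∈ T, u <+: v ∨ v <+: u

theorem List.IsPrefix.of_le_of_le {α : Type*} [LinearOrder α] {r y z : List α}
    (hrz : r <+: z) (hry : r ≤ y) (hyz : y ≤ z) : r <+: y := by
  induction r generalizing y z with
  | nil => exact nil_prefix
  | cons a r ih =>
    obtain ⟨z, rfl⟩ : ∃ z', z = a :: z' := by
      obtain ⟨t, rfl⟩ := hrz
      exact ⟨r ++ t, rfl⟩
    cases y with
    | nil => exact absurd (not_lt.2 hry) (by simp)
    | cons b y =>
      rw [cons_prefix_cons] at hrz ⊢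
      -- core's lemmas about `≤` on lists read it as `¬ l' < l`, which is not syntactically
      -- Mathlib's `≤` from `LinearOrder (List α)`; `not_lt` converts between the two
      rcases cons_le_cons_iff.1 (not_lt.2 hry) with hab | ⟨rfl, hry'⟩
      · rcases cons_le_cons_iff.1 (not_lt.2 hyz) with hba | ⟨rfl, -⟩ <;> order
      · rcases cons_le_cons_iff.1 (not_lt.2 hyz) with hba | ⟨-, hyz'⟩
        · exact absurd hba (lt_irrefl a)
        · exact ⟨rfl, ih hrz.2 (not_lt.1 hry') (not_lt.1 hyz')⟩

theorem Finset.card_filter_isPrefix_le {α : Type*} (T : Finset (List α)) (z : List α) :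
    (T.filter (· <+: z)).card ≤ z.length + 1 :=
  calc (T.filter (· <+: z)).card ≤ z.inits.toFinset.card :=
        card_le_card fun _ hu => List.mem_toFinset.2 (List.mem_inits _ _ |>.2 (mem_filter.1 hu).2)
    _ ≤ z.length + 1 := (List.toFinset_card_le _).trans (List.length_inits _).le

def pathDomain (m : ℕ) : Finset (List ℕ) :=
  (Finset.range m).image (List.replicate · 0)

theorem mem_pathDomain {m : ℕ} {x : List ℕ} :
    x ∈ pathDomain m ↔ x.length < m ∧ x = List.replicate x.length 0 := by
  constructor
  · intro hx
    obtain ⟨i, hi, rfl⟩ := Finset.mem_image.1 hx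
    simpa using hi
  · rintro ⟨hx, hrep⟩
    exact Finset.mem_image.2 ⟨x.length, Finset.mem_range.2 hx, hrep.symm⟩

theorem prefixClosed_pathDomain (m : ℕ) : PrefixClosed (pathDomain m) := by
  intro x hx y hy
  rw [mem_pathDomain] at hx ⊢
  rw [hx.2, List.prefix_replicate_iff] at hy
  exact ⟨by omega, hy.2⟩

theorem isPathDomain_pathDomain (m : ℕ) : IsPathDomain (pathDomain m) := by
  intro u hu v hv
  rw [mem_pathDomain] at hu hv
  rw [hu.2, hv.2, List.prefix_replicate_iff, List.prefix_replicate_iff]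
  simp only [List.length_replicate, and_true]
  exact le_total _ _

theorem connectedIn_pathDomain {m : ℕ} {S : Set ℕ} (hS : (S ∩ Set.Iio m).OrdConnected)
    (hne : (S ∩ Set.Iio m).Nonempty) : ConnectedIn {x | x ∈ pathDomain m ∧ x.length ∈ S} := by
  have hmin := Nat.sInf_mem hne
  have mem_iff {x : List ℕ} : x ∈ pathDomain m ∧ x.length ∈ S ↔
      x.length ∈ S ∩ Set.Iio m ∧ x = List.replicate x.length 0 := by
    rw [mem_pathDomain]
    exact ⟨fun ⟨⟨hm, hx⟩, hS⟩ => ⟨⟨hS, hm⟩, hx⟩, fun ⟨⟨hS, hm⟩, hx⟩ => ⟨⟨hm, hx⟩, hS⟩⟩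
  refine ⟨List.replicate (sInf (S ∩ Set.Iio m)) 0, mem_iff.2 (by simpa using hmin), ?_⟩
  rintro v hv
  obtain ⟨hvS, hv⟩ := mem_iff.1 hv
  have hle : sInf (S ∩ Set.Iio m) ≤ v.length := Nat.sInf_le hvS
  refine ⟨by rw [hv, List.prefix_replicate_iff]; simpa using hle, fun u hru huv => mem_iff.2 ?_⟩
  have hru := hru.length_le
  rw [List.length_replicate] at hru
  rw [hv, List.prefix_replicate_iff] at huv
  exact ⟨hS.out hmin hvS ⟨hru, huv.1⟩, huv.2⟩

theorem isTreeDecomp_pathDomain {V : Type*} {G : SimpleGraph V} {m : ℕ} {B : ℕ → Finset V}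
    (hconv : ∀ a, ({l | a ∈ B l} ∩ Set.Iio m).OrdConnected)
    (hocc : ∀ a, ∃ l < m, a ∈ B l)
    (hedge : ∀ a b, G.Adj a b → ∃ l < m, a ∈ B l ∧ b ∈ B l) :
    IsTreeDecomp G (pathDomain m) (fun x => B x.length) where
  prefix_closed := prefixClosed_pathDomain m
  vertex_conn a :=
    let ⟨l, hl, ha⟩ := hocc a
    connectedIn_pathDomain (hconv a) ⟨l, ha, hl⟩
  edge_cover a b hab := by
    obtain ⟨l, hl, ha, hb⟩ := hedge a b hab
    exact ⟨List.replicate l 0, mem_pathDomain.2 (by simpa using hl), by simpa using ha,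
      by simpa using hb⟩

section AncestorBag

variable {α V : Type*} (T : Finset (List α)) (bag : List α → Finset V)

noncomputable def ancestorBag (z : List α) : Finset V :=
  (T.filter (· <+: z)).biUnion bag

variable {T bag}

@[simp]
theorem mem_ancestorBag {z : List α} {a : V} :
    a ∈ ancestorBag T bag z ↔ ∃ u ∈ T, u <+: z ∧ a ∈ bag u := by
  simp [ancestorBag, and_assoc]

theorem card_ancestorBag_le {c : ℕ} (hc : ∀ u ∈ T, (bag u).card ≤ c) (z : List α) :
    (ancestorBag T bag z).card ≤ (z.length + 1) * c :=
  calc (ancestorBag T bag z).card ≤ ∑ u ∈ T.filter (· <+: z), (bag u).card :=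
        Finset.card_biUnion_le
    _ ≤ (T.filter (· <+: z)).card * c :=
      Finset.sum_le_card_nsmul _ _ _ fun u hu => hc u (Finset.mem_filter.1 hu).1
    _ ≤ (z.length + 1) * c := Nat.mul_le_mul_right _ (T.card_filter_isPrefix_le z)

end AncestorBag

theorem Finset.exists_monotoneOn_enum {α : Type*} [LinearOrder α] [Inhabited α] (s : Finset α) :
    ∃ z : ℕ → α, MonotoneOn z (Set.Iio s.card) ∧ (∀ l < s.card, z l ∈ s) ∧
      ∀ u ∈ s, ∃ l < s.card, z l = u := by
  let e := s.orderEmbOfFin rfl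
  refine ⟨fun l => if h : l < s.card then e ⟨l, h⟩ else default, ?_, fun l hl => ?_, fun u hu => ?_⟩
  · intro i hi j hj hij
    simp only [Set.mem_Iio] at hi hj
    simpa [hi, hj] using e.monotone (show (⟨i, hi⟩ : Fin s.card) ≤ ⟨j, hj⟩ from hij)
  · simpa only [hl, dite_true] using s.orderEmbOfFin_mem rfl ⟨l, hl⟩
  · obtain ⟨⟨l, hl⟩, rfl⟩ : u ∈ Set.range e := by rwa [s.range_orderEmbOfFin rfl]
    exact ⟨l, hl, by simp [hl]⟩

namespace IsTreeDecomp

variable {V : Type*} {G : SimpleGraph V} {T : Finset (List ℕ)} {bag : List ℕ → Finset V}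

theorem ordConnected_ancestorBag (hT : IsTreeDecomp G T bag) {m : ℕ} {z : ℕ → List ℕ}
    (hz : MonotoneOn z (Set.Iio m)) (a : V) :
    ({l | a ∈ ancestorBag T bag (z l)} ∩ Set.Iio m).OrdConnected := by
  obtain ⟨r, ⟨hrT, har⟩, hr⟩ := hT.vertex_conn a
  have root_prefix {l} (hl : a ∈ ancestorBag T bag (z l)) : r <+: z l := by
    obtain ⟨u, huT, huz, hau⟩ := mem_ancestorBag.1 hl
    exact (hr u ⟨huT, hau⟩).1.trans huz
  refine ⟨fun i ⟨hi, him⟩ j ⟨hj, hjm⟩ l ⟨hil, hlj⟩ => ?_⟩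
  have hlm : l < m := hlj.trans_lt hjm
  have hrl : r <+: z l := (root_prefix hj).of_le_of_le
    ((not_lt.1 (root_prefix hi).le).trans (hz him hlm hil)) (hz hlm hjm hlj)
  exact ⟨mem_ancestorBag.2 ⟨r, hrT, hrl, har⟩, hlm⟩

theorem pathDomain_ancestorBag (hT : IsTreeDecomp G T bag) {m : ℕ} {z : ℕ → List ℕ}
    (hz : MonotoneOn z (Set.Iio m)) (hsurj : ∀ u ∈ T, ∃ l < m, z l = u) :
    IsTreeDecomp G (pathDomain m) (fun x => ancestorBag T bag (z x.length)) := by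
  refine isTreeDecomp_pathDomain (hT.ordConnected_ancestorBag hz) (fun a => ?_) fun a b hab => ?_
  · obtain ⟨r, ⟨hrT, har⟩, -⟩ := hT.vertex_conn a
    obtain ⟨l, hl, rfl⟩ := hsurj r hrT
    exact ⟨l, hl, mem_ancestorBag.2 ⟨z l, hrT, List.prefix_refl _, har⟩⟩
  · obtain ⟨v, hvT, hav, hbv⟩ := hT.edge_cover a b hab
    obtain ⟨l, hl, rfl⟩ := hsurj v hvT
    exact ⟨l, hl, mem_ancestorBag.2 ⟨z l, hvT, List.prefix_refl _, hav⟩,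
      mem_ancestorBag.2 ⟨z l, hvT, List.prefix_refl _, hbv⟩⟩

end IsTreeDecomp

theorem stmt_6_general {V : Type*} (G : SimpleGraph V) (n k : ℕ)
    (h : ∃ (T : Finset (List ℕ)) (bag : List ℕ → Finset V),
      IsTreeDecomp G T bag ∧ (∀ x ∈ T, x.length < n) ∧ ∀ x ∈ T, (bag x).card ≤ k + 1) :
    ∃ (T : Finset (List ℕ)) (bag : List ℕ → Finset V),
      IsTreeDecomp G T bag ∧ IsPathDomain T ∧ ∀ x ∈ T, (bag x).card ≤ n * (k + 1) := by
  obtain ⟨T, bag, hT, hlen, hcard⟩ := h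
  obtain ⟨z, hz, hzT, hsurj⟩ := T.exists_monotoneOn_enum
  refine ⟨pathDomain T.card, fun x => ancestorBag T bag (z x.length),
    hT.pathDomain_ancestorBag hz hsurj, isPathDomain_pathDomain _, fun x hx => ?_⟩
  calc (ancestorBag T bag (z x.length)).card ≤ ((z x.length).length + 1) * (k + 1) :=
        card_ancestorBag_le hcard _
    _ ≤ n * (k + 1) := Nat.mul_le_mul_right _ (hlen _ (hzT _ (mem_pathDomain.1 hx).1))

/-- For every finite graph `G` and every `n`, if `G` has a tree
decomposition of height at most `n` and width at most `k` (i.e. `twd_n(G) ≤ k`), then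
the path-width of `G` satisfies `pwd(G) < n·(k+1)`: there is a path decomposition all
of whose bags have cardinality at most `n·(k+1)`. -/
theorem stmt_6 {V : Type*} [Fintype V] (G : SimpleGraph V) (n k : ℕ)
    (h : ∃ (T : Finset (List ℕ)) (bag : List ℕ → Finset V),
      IsTreeDecomp G T bag ∧ (∀ x ∈ T, x.length < n) ∧ ∀ x ∈ T, (bag x).card ≤ k + 1) :
    ∃ (T : Finset (List ℕ)) (bag : List ℕ → Finset V),
      IsTreeDecomp G T bag ∧ IsPathDomain T ∧ ∀ x ∈ T, (bag x).card ≤ n * (k + 1) :=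
  stmt_6_general G n k h
end

section
/- Let G be a graph with a tree decomposition D = (U_v)_{v∈T} of width k and height at most n+1. If m ∈ ℕ is such that the complete m-ary tree of height n+1 cannot be embedded into T (as an order-preserving injection of partial orders), then the n-depth tree-width of G is less than m·(k+1). -/
open scoped Classical

/-- The complete `m`-ary order-tree of height `h` (nodes: sequences over `Fin m` of
length `< h`) embeds into the tree domain `T`: there is an injective map into `T`
preserving and reflecting the tree (prefix) order. -/
def EmbedsCompleteTree (m h : ℕ) (T : Finset (List ℕ)) : Prop :=
  ∃ f : List (Fin m) → List ℕ,
    (∀ x : List (Fin m), x.length < h → f x ∈ T) ∧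
    (∀ x y : List (Fin m), x.length < h → y.length < h → f x = f y → x = y) ∧
    (∀ x y : List (Fin m), x.length < h → y.length < h → (x <+: y ↔ f x <+: f y))

/-!
Call a node `v` of `T` fat if the subtree below it contains a complete `m`-ary tree of height
`n + 1 - |v|`, the most its depth leaves room for. The root is not fat, every node of depth `n`
is, and a non-fat node has fewer than `m` fat children, since `m` of them would glue to a
complete tree below it. Contract every edge from a non-fat node to a fat child. A contraction
class is then a single node or a non-fat node with its fewer than `m` fat children, so the
merged bags have at most `m (k + 1)` vertices; and a path from the root to depth `n` crosses a
contracted edge where it first becomes fat, so the contracted tree has height at most `n`.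
-/

namespace TreeDomain

/-- Contracting the edges from the nodes of `F` to their parents: a node is sent to the codes
of its nonempty prefixes outside `F`, which is the address of its contraction class in the
contracted tree. -/
noncomputable def contract (F : Set (List ℕ)) (v : List ℕ) : List ℕ :=
  (v.inits.filter fun u => u ≠ [] ∧ u ∉ F).map Encodable.encode

variable {F : Set (List ℕ)}

@[simp]
lemma contract_nil : contract F [] = [] := by
  simp [contract]

lemma contract_concat (v : List ℕ) (a : ℕ) :
    contract F (v ++ [a]) =
      if v ++ [a] ∈ F then contract F v else contract F v ++ [Encodable.encode (v ++ [a])] := by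
  split_ifs with h <;> simp [contract, List.inits_append, h]

lemma contract_mono {v u : List ℕ} (h : v <+: u) : contract F v <+: contract F u := by
  obtain ⟨t, rfl⟩ := h
  rw [contract, contract, List.inits_append]
  exact ((List.prefix_append _ _).filter _).map _

lemma length_contract_le (v : List ℕ) : (contract F v).length ≤ v.length := by
  induction v using List.reverseRecOn with
  | nil => simp
  | append_singleton v a ih =>
    rw [contract_concat]
    split_ifs <;> simp only [List.length_append, List.length_singleton] <;> omega

lemma length_contract_lt {p v : List ℕ} (hpv : p <+: v) (hpF : p ∈ F) (hp : p ≠ []) :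
    (contract F v).length < v.length := by
  induction v using List.reverseRecOn with
  | nil => exact absurd (List.prefix_nil.mp hpv) hp
  | append_singleton v a ih =>
    rw [contract_concat]
    rcases List.prefix_concat_iff.mp hpv with rfl | hpv
    · simpa [hpF] using Nat.lt_succ_of_le (length_contract_le v)
    · have := ih hpv
      split_ifs <;> simp only [List.length_append, List.length_singleton] <;> omega

lemma contract_injOn : Set.InjOn (contract F) Fᶜ := by
  have last : ∀ v ∉ F, v ≠ [] → (contract F v).getLast? = some (Encodable.encode v) := by
    intro v hvF hv
    obtain ⟨v, a, rfl⟩ := (List.eq_nil_or_concat' v).resolve_left hv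
    simp [contract_concat, hvF]
  intro v hvF u huF h
  rcases eq_or_ne v [] with rfl | hv <;> rcases eq_or_ne u [] with rfl | hu
  · rfl
  · simpa [← h] using last u huF hu
  · simpa [h] using last v hvF hv
  · exact Encodable.encode_injective <|
      Option.some.inj ((last v hvF hv).symm.trans (h ▸ last u huF hu))

lemma exists_contract_eq {v u w : List ℕ} (hvu : v <+: u) (hv : contract F v <+: w)
    (hu : w <+: contract F u) : ∃ u', v <+: u' ∧ u' <+: u ∧ contract F u' = w := by
  induction u using List.reverseRecOn with
  | nil =>
    obtain rfl := List.prefix_nil.mp hvu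
    exact ⟨[], List.prefix_rfl, List.prefix_rfl, (List.prefix_nil.mp (by simpa using hu)).symm⟩
  | append_singleton u a ih =>
    rcases List.prefix_concat_iff.mp hvu with rfl | hvu
    · exact ⟨_, List.prefix_rfl, List.prefix_rfl,
        hv.eq_of_length (hv.length_le.antisymm hu.length_le)⟩
    · have : w <+: contract F u ∨ w = contract F (u ++ [a]) := by
        rw [contract_concat] at hu ⊢
        split_ifs at hu ⊢
        · exact Or.inl hu
        · exact (List.prefix_concat_iff.mp hu).symm
      rcases this with hw | rfl
      · obtain ⟨u', hvu', hu'u, rfl⟩ := ih hvu hw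
        exact ⟨u', hvu', hu'u.trans (List.prefix_append _ _), rfl⟩
      · exact ⟨_, hvu.trans (List.prefix_append _ _), List.prefix_rfl, rfl⟩

noncomputable def subtree (T : Finset (List ℕ)) (v : List ℕ) : Finset (List ℕ) :=
  (T.filter (v <+: ·)).image (List.drop v.length)

variable {T : Finset (List ℕ)}

@[simp]
lemma mem_subtree {v w : List ℕ} : w ∈ subtree T v ↔ v ++ w ∈ T := by
  simp only [subtree, Finset.mem_image, Finset.mem_filter]
  constructor
  · rintro ⟨_, ⟨hu, t, rfl⟩, rfl⟩
    simpa using hu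
  · exact fun h => ⟨_, ⟨h, List.prefix_append _ _⟩, by simp⟩

lemma subtree_nil : subtree T [] = T := by
  ext
  simp

lemma subtree_subtree (u v : List ℕ) : subtree (subtree T u) v = subtree T (u ++ v) := by
  ext
  simp

end TreeDomain

open TreeDomain

section Contraction

variable {V : Type*} {T : Finset (List ℕ)} {bag : List ℕ → Finset V} {F : Set (List ℕ)}

noncomputable def contractBag (T : Finset (List ℕ)) (bag : List ℕ → Finset V)
    (F : Set (List ℕ)) (w : List ℕ) : Finset V :=
  (T.filter fun v => contract F v = w).biUnion bag

lemma mem_contractBag {a : V} {w : List ℕ} :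
    a ∈ contractBag T bag F w ↔ ∃ v ∈ T, contract F v = w ∧ a ∈ bag v := by
  simp [contractBag, and_assoc]

theorem IsTreeDecomp.contract {G : SimpleGraph V} (h : IsTreeDecomp G T bag)
    (F : Set (List ℕ)) : IsTreeDecomp G (T.image (contract F)) (contractBag T bag F) where
  prefix_closed := by
    intro _ hw y hy
    obtain ⟨u, hu, rfl⟩ := Finset.mem_image.mp hw
    obtain ⟨u', -, hu'u, rfl⟩ := exists_contract_eq List.nil_prefix (by simp) hy
    exact Finset.mem_image_of_mem _ (h.prefix_closed u hu u' hu'u)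
  vertex_conn a := by
    obtain ⟨r, ⟨hrT, hra⟩, hr⟩ := h.vertex_conn a
    refine ⟨TreeDomain.contract F r,
      ⟨Finset.mem_image_of_mem _ hrT, mem_contractBag.2 ⟨r, hrT, rfl, hra⟩⟩, ?_⟩
    rintro _ ⟨-, hwa⟩
    obtain ⟨v, hvT, rfl, hva⟩ := mem_contractBag.1 hwa
    obtain ⟨hrv, hbetween⟩ := hr v ⟨hvT, hva⟩
    refine ⟨contract_mono hrv, fun w hrw hwv => ?_⟩
    obtain ⟨u, hru, huv, rfl⟩ := exists_contract_eq hrv hrw hwv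
    obtain ⟨huT, hua⟩ := hbetween u hru huv
    exact ⟨Finset.mem_image_of_mem _ huT, mem_contractBag.2 ⟨u, huT, rfl, hua⟩⟩
  edge_cover a b hab := by
    obtain ⟨v, hvT, hav, hbv⟩ := h.edge_cover a b hab
    exact ⟨TreeDomain.contract F v, Finset.mem_image_of_mem _ hvT,
      mem_contractBag.2 ⟨v, hvT, rfl, hav⟩, mem_contractBag.2 ⟨v, hvT, rfl, hbv⟩⟩

lemma card_contractBag_le {k : ℕ} (hw : ∀ x ∈ T, (bag x).card ≤ k + 1) (w : List ℕ) :
    (contractBag T bag F w).card ≤ (T.filter fun v => contract F v = w).card * (k + 1) :=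
  Finset.card_biUnion_le_card_mul _ _ _ fun v hv => hw v (Finset.mem_filter.1 hv).1

end Contraction

lemma EmbedsCompleteTree.of_prefix_iff {m h : ℕ} {T : Finset (List ℕ)}
    (f : List (Fin m) → List ℕ)
    (hmem : ∀ x : List (Fin m), x.length < h → f x ∈ T)
    (hprefix : ∀ x y : List (Fin m), x.length < h → y.length < h →
      (x <+: y ↔ f x <+: f y)) :
    EmbedsCompleteTree m h T :=
  ⟨f, hmem, fun x y hx hy hxy =>
    have hxy' := (hprefix x y hx hy).2 (hxy ▸ List.prefix_rfl)
    have hyx' := (hprefix y x hy hx).2 (hxy ▸ List.prefix_rfl)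
    hxy'.eq_of_length (hxy'.length_le.antisymm hyx'.length_le), hprefix⟩

lemma embedsCompleteTree_one {m : ℕ} {T : Finset (List ℕ)} (hT : [] ∈ T) :
    EmbedsCompleteTree m 1 T :=
  .of_prefix_iff (fun _ => []) (fun _ _ => hT) fun x y hx hy => by
    simp_all

lemma EmbedsCompleteTree.of_children {m h : ℕ} {T : Finset (List ℕ)} (hT : [] ∈ T)
    (a : Fin m → ℕ) (ha : Function.Injective a)
    (hchild : ∀ j, EmbedsCompleteTree m h (subtree T [a j])) :
    EmbedsCompleteTree m (h + 1) T := by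
  choose f hmem _ hprefix using hchild
  refine .of_prefix_iff (fun | [] => [] | j :: x => a j :: f j x) ?_ ?_
  · rintro (_ | ⟨j, x⟩) hx
    · exact hT
    · simpa using hmem j x (by simpa using hx)
  · rintro (_ | ⟨j, x⟩) (_ | ⟨j', y⟩) hx hy
    · simp
    · simp
    · simp
    · simp only [List.cons_prefix_cons, ha.eq_iff]
      constructor
      · rintro ⟨rfl, hxy⟩
        exact ⟨rfl, (hprefix j x y (by simpa using hx) (by simpa using hy)).1 hxy⟩
      · rintro ⟨rfl, hxy⟩
        exact ⟨rfl, (hprefix j x y (by simpa using hx) (by simpa using hy)).2 hxy⟩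

namespace TreeDomain

section Fat

variable (m n : ℕ) (T : Finset (List ℕ))

def IsFat (v : List ℕ) : Prop :=
  EmbedsCompleteTree m (n + 1 - v.length) (subtree T v)

def fatEdges : Set (List ℕ) :=
  {v | ∃ p a, v = p ++ [a] ∧ IsFat m n T v ∧ ¬ IsFat m n T p}

noncomputable def fatChildren (p : List ℕ) : Finset ℕ :=
  ((subtree T p).image List.headI).filter fun a => IsFat m n T (p ++ [a])

variable {m n T}

lemma IsFat.of_mem_fatEdges {v : List ℕ} (hv : v ∈ fatEdges m n T) : IsFat m n T v := by
  obtain ⟨-, -, -, hfat, -⟩ := hv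
  exact hfat

lemma isFat_of_length_eq {v : List ℕ} (hv : v ∈ T) (hlen : v.length = n) : IsFat m n T v := by
  rw [IsFat, hlen, Nat.add_sub_cancel_left]
  exact embedsCompleteTree_one (by simpa using hv)

lemma exists_prefix_mem_fatEdges (h0 : ¬ IsFat m n T []) {v : List ℕ} (hv : IsFat m n T v) :
    ∃ p, p <+: v ∧ p ≠ [] ∧ p ∈ fatEdges m n T := by
  induction v using List.reverseRecOn with
  | nil => exact absurd hv h0
  | append_singleton u a ih =>
    by_cases hu : IsFat m n T u
    · obtain ⟨p, hpu, hp⟩ := ih hu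
      exact ⟨p, hpu.trans (List.prefix_append _ _), hp⟩
    · exact ⟨u ++ [a], List.prefix_rfl, by simp, u, a, rfl, hv, hu⟩

lemma card_fatChildren_lt (hh : ∀ x ∈ T, x.length < n + 1) {p : List ℕ} (hp : p ∈ T)
    (hfat : ¬ IsFat m n T p) : (fatChildren m n T p).card < m := by
  by_contra! hcard
  let e := (fatChildren m n T p).equivFin.symm
  apply hfat
  have := hh p hp
  rw [IsFat, show n + 1 - p.length = n + 1 - (p ++ [0]).length + 1 by simp; omega]
  refine .of_children (by simpa using hp) (fun j => e (Fin.castLE hcard j))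
    (Subtype.val_injective.comp (e.injective.comp (Fin.castLE_injective hcard))) fun j => ?_
  rw [subtree_subtree]
  simpa [IsFat] using (Finset.mem_filter.1 (e (Fin.castLE hcard j)).2).2

lemma exists_class_root (hpc : PrefixClosed T) {v : List ℕ} (hv : v ∈ T) :
    ∃ p ∈ T, p ∉ fatEdges m n T ∧
      contract (fatEdges m n T) v = contract (fatEdges m n T) p ∧
      (v = p ∨ ¬ IsFat m n T p ∧ ∃ a ∈ fatChildren m n T p, v = p ++ [a]) := by
  by_cases hvF : v ∈ fatEdges m n T
  · obtain ⟨p, a, rfl, hfat, hp⟩ := id hvF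
    refine ⟨p, hpc _ hv _ (List.prefix_append _ _), fun h => hp (IsFat.of_mem_fatEdges h),
      by rw [contract_concat, if_pos hvF], Or.inr ⟨hp, a, ?_, rfl⟩⟩
    exact Finset.mem_filter.2 ⟨Finset.mem_image.2 ⟨[a], by simpa using hv, rfl⟩, hfat⟩
  · exact ⟨v, hv, hvF, rfl, Or.inl rfl⟩

lemma card_filter_contract_fatEdges_le (hpc : PrefixClosed T) (hh : ∀ x ∈ T, x.length < n + 1)
    (h0 : ¬ IsFat m n T []) (w : List ℕ) :
    (T.filter fun v => contract (fatEdges m n T) v = w).card ≤ m := by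
  set F := fatEdges m n T
  obtain hempty | ⟨v₀, hv₀⟩ := (T.filter fun v => contract F v = w).eq_empty_or_nonempty
  · simp [hempty]
  obtain ⟨hv₀T, rfl⟩ := Finset.mem_filter.1 hv₀
  obtain ⟨p, hpT, hpF, hv₀p, -⟩ := exists_class_root hpc hv₀T
  have hfiber : ∀ v ∈ T.filter (contract F · = contract F v₀),
      v = p ∨ ¬ IsFat m n T p ∧ ∃ a ∈ fatChildren m n T p, v = p ++ [a] := by
    intro v hv
    obtain ⟨hvT, hvv₀⟩ := Finset.mem_filter.1 hv
    obtain ⟨q, -, hqF, hvq, hv⟩ := exists_class_root hpc hvT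
    obtain rfl : q = p := contract_injOn hqF hpF (hvq.symm.trans (hvv₀.trans hv₀p))
    exact hv
  by_cases hp : IsFat m n T p
  · calc _ ≤ ({p} : Finset (List ℕ)).card :=
          Finset.card_le_card fun v hv => by simpa [hp] using hfiber v hv
      _ ≤ m := Nat.zero_lt_of_lt
          (card_fatChildren_lt hh (hpc _ hv₀T _ List.nil_prefix) h0)
  · calc _ ≤ (insert p ((fatChildren m n T p).image (p ++ [·]))).card :=
          Finset.card_le_card fun v hv => by simpa [hp, eq_comm] using hfiber v hv
      _ ≤ (fatChildren m n T p).card + 1 :=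
          (Finset.card_insert_le _ _).trans (Nat.add_le_add_right Finset.card_image_le 1)
      _ ≤ m := card_fatChildren_lt hh hpT hp

lemma length_contract_fatEdges_lt (hh : ∀ x ∈ T, x.length < n + 1) (h0 : ¬ IsFat m n T [])
    {v : List ℕ} (hv : v ∈ T) : (contract (fatEdges m n T) v).length < n := by
  rcases (Nat.lt_succ_iff.1 (hh v hv)).lt_or_eq with hlt | hlen
  · exact (length_contract_le v).trans_lt hlt
  · obtain ⟨p, hpv, hp, hpF⟩ := exists_prefix_mem_fatEdges h0 (isFat_of_length_eq hv hlen)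
    exact (length_contract_lt hpv hpF hp).trans_eq hlen

end Fat

end TreeDomain

theorem stmt_7_general {V : Type*} (G : SimpleGraph V) (n k m : ℕ)
    (T : Finset (List ℕ)) (bag : List ℕ → Finset V)
    (hTD : IsTreeDecomp G T bag)
    (hw : ∀ x ∈ T, (bag x).card ≤ k + 1)
    (hh : ∀ x ∈ T, x.length < n + 1)
    (hemb : ¬ EmbedsCompleteTree m (n + 1) T) :
    ∃ (T' : Finset (List ℕ)) (bag' : List ℕ → Finset V),
      IsTreeDecomp G T' bag' ∧ (∀ x ∈ T', x.length < n) ∧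
      ∀ x ∈ T', (bag' x).card ≤ m * (k + 1) := by
  have h0 : ¬ IsFat m n T [] := by simpa [IsFat, subtree_nil] using hemb
  refine ⟨T.image (contract (fatEdges m n T)), contractBag T bag (fatEdges m n T),
    hTD.contract _, ?_, fun w _ => ?_⟩
  · simp only [Finset.mem_image, forall_exists_index, and_imp]
    rintro _ v hv rfl
    exact length_contract_fatEdges_lt hh h0 hv
  · exact (card_contractBag_le hw w).trans <| Nat.mul_le_mul_right _ <|
      card_filter_contract_fatEdges_le hTD.prefix_closed hh h0 w

/-- Let `G` have a tree decomposition of width `k` and height at most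
`n+1` whose underlying tree `T` does not admit an embedding of the complete `m`-ary tree
of height `n+1`. Then `twd_n(G) < m·(k+1)`: `G` has a tree decomposition of height at
most `n` with all bags of cardinality at most `m·(k+1)`. -/
theorem stmt_7 {V : Type*} [Fintype V] (G : SimpleGraph V) (n k m : ℕ)
    (T : Finset (List ℕ)) (bag : List ℕ → Finset V)
    (hTD : IsTreeDecomp G T bag)
    (hw : ∀ x ∈ T, (bag x).card ≤ k + 1)
    (hh : ∀ x ∈ T, x.length < n + 1)
    (hemb : ¬ EmbedsCompleteTree m (n + 1) T) :
    ∃ (T' : Finset (List ℕ)) (bag' : List ℕ → Finset V),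
      IsTreeDecomp G T' bag' ∧ (∀ x ∈ T', x.length < n) ∧
      ∀ x ∈ T', (bag' x).card ≤ m * (k + 1) :=
  stmt_7_general G n k m T bag hTD hw hh hemb
end

section
/- If tree-depth td(G) ≤ n then the n-depth tree-width satisfies twd_n(G) < n; conversely, if twd_n(G) < k then td(G) ≤ n·k. -/
open scoped Classical

/-- `td(G) ≤ n`: there is a rooted forest of height `n` on the vertices of `G`
(placing vertices injectively at nodes of level `< n`) such that every edge of `G`
joins an ancestor-descendant pair (comparable in the prefix order). -/
def TreeDepthLE {V : Type*} (G : SimpleGraph V) (n : ℕ) : Prop :=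
  ∃ pos : V → List ℕ, Function.Injective pos ∧ (∀ v, (pos v).length < n) ∧
    ∀ u v, G.Adj u v → pos u <+: pos v ∨ pos v <+: pos u

/-!
A forest embedding `pos` of `G` gives the tree decomposition on all prefixes of the
positions whose bag at `x` is the set of ancestors of `x`; it has at most `n` elements since
they are determined by their depth.

Conversely, given a tree decomposition, send each vertex `a` to the highest node `r a` whose
bag contains it, and spread the at most `k` vertices sharing a node over a chain of `k` levels:
the node `[d₁, …, dₘ]` becomes `0ᵏ⁻¹ (d₁+1) ⋯ 0ᵏ⁻¹ (dₘ+1)`, followed by `i` zeros for the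
`i`-th vertex of the bag. The two ends of an edge share a bag, so their highest nodes are
comparable, and then so are their codes.
-/

section Forward

def prefixClosure (P : Finset (List ℕ)) : Finset (List ℕ) :=
  P.biUnion fun y => y.inits.toFinset

lemma mem_prefixClosure {P : Finset (List ℕ)} {x : List ℕ} :
    x ∈ prefixClosure P ↔ ∃ y ∈ P, x <+: y := by
  simp [prefixClosure]

lemma prefixClosed_prefixClosure (P : Finset (List ℕ)) : PrefixClosed (prefixClosure P) := by
  intro x hx z hzx
  obtain ⟨y, hy, hxy⟩ := mem_prefixClosure.mp hx
  exact mem_prefixClosure.mpr ⟨y, hy, hzx.trans hxy⟩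

lemma length_lt_of_mem_prefixClosure {P : Finset (List ℕ)} {n : ℕ}
    (hP : ∀ y ∈ P, y.length < n) {x : List ℕ} (hx : x ∈ prefixClosure P) : x.length < n := by
  obtain ⟨y, hy, hxy⟩ := mem_prefixClosure.mp hx
  exact hxy.length_le.trans_lt (hP y hy)

variable {V : Type*} [Fintype V] (pos : V → List ℕ)

lemma isTreeDecomp_ancestorBags {G : SimpleGraph V}
    (hadj : ∀ u v, G.Adj u v → pos u <+: pos v ∨ pos v <+: pos u) :
    IsTreeDecomp G (prefixClosure (Finset.univ.image pos))
      (fun x => Finset.univ.filter fun v => pos v <+: x) := by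
  have hpos : ∀ a, pos a ∈ prefixClosure (Finset.univ.image pos) := fun a =>
    mem_prefixClosure.mpr ⟨pos a, Finset.mem_image_of_mem _ (Finset.mem_univ a), List.prefix_rfl⟩
  refine ⟨prefixClosed_prefixClosure _, fun a => ?_, fun a b hab => ?_⟩
  · refine ⟨pos a, ⟨hpos a, by simp⟩, fun v ⟨hv, hav⟩ => ?_⟩
    simp only [Finset.mem_filter, Finset.mem_univ, true_and] at hav
    exact ⟨hav, fun u hau huv =>
      ⟨prefixClosed_prefixClosure _ v hv u huv, by simpa using hau⟩⟩
  · rcases hadj a b hab with h | h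
    · exact ⟨pos b, hpos b, by simpa using h, by simp⟩
    · exact ⟨pos a, hpos a, by simp, by simpa using h⟩

lemma card_filter_prefix_le {n : ℕ} (hinj : Function.Injective pos)
    (hlen : ∀ v, (pos v).length < n) (x : List ℕ) :
    (Finset.univ.filter fun v => pos v <+: x).card ≤ n := by
  -- a prefix of `x` is determined by its length
  have hinjOn : Set.InjOn (fun v => (pos v).length) {v | pos v <+: x} := by
    intro a ha b hb hab
    apply hinj
    rw [List.prefix_iff_eq_take.mp ha, List.prefix_iff_eq_take.mp hb]
    exact congrArg (x.take ·) hab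
  simpa using Finset.card_le_card_of_injOn (t := Finset.range n) _
    (fun v _ => Finset.mem_range.mpr (hlen v)) (by simpa using hinjOn)

end Forward

section Converse

lemma replicate_prefix_replicate {α : Type*} {a : α} {i j : ℕ} (h : i ≤ j) :
    List.replicate i a <+: List.replicate j a :=
  List.prefix_replicate_iff.mpr ⟨by simpa using h, by simp⟩

def padEncode (k : ℕ) (p : List ℕ) : List ℕ :=
  p.flatMap fun d => List.replicate (k - 1) 0 ++ [d + 1]

def padCode (k : ℕ) (p : List ℕ) (i : ℕ) : List ℕ :=
  padEncode k p ++ List.replicate i 0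

def padDecode (l : List ℕ) : List ℕ :=
  (l.filter (· ≠ 0)).map (· - 1)

lemma padDecode_padCode (k : ℕ) (p : List ℕ) (i : ℕ) : padDecode (padCode k p i) = p := by
  induction p with
  | nil => simp [padCode, padEncode, padDecode]
  | cons d p ih =>
    simpa [padCode, padEncode, padDecode, List.filter_append] using ih

lemma padCode_injective {k i j : ℕ} {p q : List ℕ} (h : padCode k p i = padCode k q j) :
    p = q ∧ i = j := by
  have hpq : p = q := by rw [← padDecode_padCode k p i, h, padDecode_padCode]
  subst hpq
  exact ⟨rfl, by simpa using congrArg List.length (List.append_cancel_left h)⟩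

lemma length_padCode {k : ℕ} (hk : 0 < k) (p : List ℕ) (i : ℕ) :
    (padCode k p i).length = k * p.length + i := by
  induction p with
  | nil => simp [padCode, padEncode]
  | cons d p ih =>
    simp only [padCode, padEncode, List.flatMap_cons, List.length_append, List.length_replicate,
      List.length_cons, List.length_nil, Nat.mul_succ] at ih ⊢
    omega

lemma padCode_prefix_of_prefix_of_ne {k i j : ℕ} {p q : List ℕ} (hi : i < k)
    (hpq : p <+: q) (hne : p ≠ q) : padCode k p i <+: padCode k q j := by
  obtain ⟨_ | ⟨d, t⟩, rfl⟩ := hpq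
  · simp at hne
  · simp only [padCode, padEncode, List.flatMap_append, List.flatMap_cons, List.append_assoc]
    refine (List.prefix_append_right_inj _).mpr ?_
    exact (replicate_prefix_replicate (by omega)).trans (List.prefix_append _ _)

lemma padCode_prefix_or_prefix {k i j : ℕ} {p q : List ℕ} (hi : i < k) (hj : j < k)
    (hpq : p <+: q ∨ q <+: p) :
    padCode k p i <+: padCode k q j ∨ padCode k q j <+: padCode k p i := by
  by_cases hne : p = q
  · subst hne
    rcases le_total i j with h | h
    · exact .inl ((List.prefix_append_right_inj _).mpr (replicate_prefix_replicate h))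
    · exact .inr ((List.prefix_append_right_inj _).mpr (replicate_prefix_replicate h))
  · rcases hpq with h | h
    · exact .inl (padCode_prefix_of_prefix_of_ne hi h hne)
    · exact .inr (padCode_prefix_of_prefix_of_ne hj h (Ne.symm hne))

end Converse

theorem IsTreeDecomp.treeDepthLE_mul {V : Type*} {G : SimpleGraph V} {T : Finset (List ℕ)}
    {bag : List ℕ → Finset V} {n k : ℕ} (hd : IsTreeDecomp G T bag)
    (hn : ∀ x ∈ T, x.length < n) (hk : ∀ x ∈ T, (bag x).card ≤ k) :
    TreeDepthLE G (n * k) := by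
  choose r hr hroot using hd.vertex_conn
  let idx (a : V) : ℕ := (bag (r a)).toList.idxOf a
  have hidx : ∀ a, idx a < k := fun a =>
    ((List.idxOf_lt_length_iff.mpr (Finset.mem_toList.mpr (hr a).2)).trans_eq
      (Finset.length_toList _)).trans_le (hk _ (hr a).1)
  refine ⟨fun a => padCode k (r a) (idx a), fun a b h => ?_, fun a => ?_, fun u v huv => ?_⟩
  · obtain ⟨hrab, hidxab⟩ := padCode_injective h
    have ha : a ∈ (bag (r b)).toList := by rw [← hrab]; exact Finset.mem_toList.mpr (hr a).2
    exact (List.idxOf_inj ha).mp (by simpa only [idx, hrab] using hidxab)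
  · have hidxa := hidx a
    have hra := hn _ (hr a).1
    rw [length_padCode (by omega)]
    calc k * (r a).length + idx a < k * ((r a).length + 1) := by rw [Nat.mul_succ]; omega
      _ ≤ n * k := by rw [Nat.mul_comm n]; exact Nat.mul_le_mul_left k hra
  · obtain ⟨w, hw, hu, hv⟩ := hd.edge_cover u v huv
    exact padCode_prefix_or_prefix (hidx u) (hidx v)
      (List.prefix_or_prefix_of_prefix (hroot u w ⟨hw, hu⟩).1 (hroot v w ⟨hw, hv⟩).1)

/-- If `td(G) ≤ n` then `twd_n(G) < n` (a tree decomposition of height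
at most `n` with bags of cardinality at most `n`); conversely, if `twd_n(G) < k` (a tree
decomposition of height at most `n` with bags of cardinality at most `k`) then
`td(G) ≤ n·k`. -/
theorem stmt_8 {V : Type*} [Fintype V] (G : SimpleGraph V) (n k : ℕ) :
    (TreeDepthLE G n →
      ∃ (T : Finset (List ℕ)) (bag : List ℕ → Finset V),
        IsTreeDecomp G T bag ∧ (∀ x ∈ T, x.length < n) ∧ ∀ x ∈ T, (bag x).card ≤ n) ∧
    ((∃ (T : Finset (List ℕ)) (bag : List ℕ → Finset V),
        IsTreeDecomp G T bag ∧ (∀ x ∈ T, x.length < n) ∧ ∀ x ∈ T, (bag x).card ≤ k) →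
      TreeDepthLE G (n * k)) := by
  refine ⟨fun ⟨pos, hinj, hlen, hadj⟩ => ?_, fun ⟨T, bag, hd, hn, hk⟩ => hd.treeDepthLE_mul hn hk⟩
  exact ⟨_, _, isTreeDecomp_ancestorBags pos hadj,
    fun x => length_lt_of_mem_prefixClosure (by simpa using hlen),
    fun x _ => card_filter_prefix_le pos hinj hlen x⟩
end

section
/- Let D = (U_v)_{v∈T} be a strict tree decomposition of a graph G of height at most n, let L_i = {a ∈ V : |μ(a)| = i} for i < n, and let G_{≥i} be the subgraph of G induced by L_i ∪ … ∪ L_{n−1}. Define, for a ∈ L_i and b ∈ L_j: a ⪯' b iff i ≤ j and a, b lie in the same connected component of G_{≥i}. Then for all a, b ∉ L_0: a ⪯' b if and only if μ(a) ⪯ μ(b) in T. -/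
/-!
Write `μ a` for the least node whose bag contains `a`. An edge `cd` of `G` lies in some bag `U_u`,
so `μ c` and `μ d` are both prefixes of `u`; hence a prefix `m` of `μ c` with `|m| ≤ |μ d|` is a
prefix of `μ d`. Along a walk inside `G_{≥|μ a|}` the prefix `μ a` is therefore carried from `a`
to `b`. Conversely, `U_{⌈v}` is exactly `{x | v ⪯ μ x}`, so if `μ a ⪯ μ b` then `a` and `b` both
lie in `U_{⌈μ a}`, which strictness makes connected, and a walk inside it stays in `G_{≥|μ a|}`.
-/

open scoped Classical

/-- `U_{⌈v}`: the elements appearing in some bag at or below `v` but in no bag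
strictly above `v`. -/
def AboveSet {V : Type*} (T : Finset (List ℕ)) (bag : List ℕ → Finset V)
    (v : List ℕ) : Set V :=
  {a | (∃ u ∈ T, v <+: u ∧ a ∈ bag u) ∧ ∀ u ∈ T, a ∈ bag u → ¬(u <+: v ∧ u ≠ v)}

/-- A strict tree decomposition. -/
def IsStrict {V : Type*} (G : SimpleGraph V)
    (T : Finset (List ℕ)) (bag : List ℕ → Finset V) : Prop :=
  (∀ v ∈ T, ∃ a ∈ bag v, ∀ u ∈ T, a ∈ bag u → v <+: u) ∧
  (∀ v ∈ T, v ≠ [] → (G.induce (AboveSet T bag v)).Connected)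

section LeastBag

variable {V : Type*} {G : SimpleGraph V} {T : Finset (List ℕ)} {bag : List ℕ → Finset V}
  {μ : V → List ℕ}

theorem mem_aboveSet_iff
    (hμ : ∀ a : V, μ a ∈ T ∧ a ∈ bag (μ a) ∧ ∀ u ∈ T, a ∈ bag u → μ a <+: u)
    {v : List ℕ} {x : V} : x ∈ AboveSet T bag v ↔ v <+: μ x := by
  obtain ⟨hxT, hx, hleast⟩ := hμ x
  constructor
  · rintro ⟨⟨u, huT, hvu, hxu⟩, hnotAbove⟩
    rcases List.prefix_or_prefix_of_prefix hvu (hleast u huT hxu) with h | h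
    · exact h
    · by_cases hxv : μ x = v
      · exact hxv ▸ List.prefix_rfl
      · exact absurd ⟨h, hxv⟩ (hnotAbove (μ x) hxT hx)
  · intro hv
    refine ⟨⟨μ x, hxT, hv, hx⟩, fun u huT hxu ⟨huv, hne⟩ => hne ?_⟩
    exact huv.eq_of_length (le_antisymm huv.length_le (hv.trans (hleast u huT hxu)).length_le)

theorem prefix_of_adj_of_prefix (hTD : IsTreeDecomp G T bag)
    (hμ : ∀ a : V, ∀ u ∈ T, a ∈ bag u → μ a <+: u)
    {m : List ℕ} {c d : V} (hcd : G.Adj c d) (hc : m <+: μ c)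
    (hlen : m.length ≤ (μ d).length) : m <+: μ d := by
  obtain ⟨u, huT, hcu, hdu⟩ := hTD.edge_cover c d hcd
  exact List.prefix_of_prefix_length_le (hc.trans (hμ c u huT hcu)) (hμ d u huT hdu) hlen

theorem prefix_of_walk_of_prefix (hTD : IsTreeDecomp G T bag)
    (hμ : ∀ a : V, ∀ u ∈ T, a ∈ bag u → μ a <+: u)
    {m : List ℕ} {c d : V} (p : G.Walk c d)
    (hp : ∀ x ∈ p.support, m.length ≤ (μ x).length) (hc : m <+: μ c) : m <+: μ d := by
  induction p with
  | nil => exact hc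
  | @cons c e d hce q ih =>
    rw [SimpleGraph.Walk.support_cons] at hp
    have he : m <+: μ e :=
      prefix_of_adj_of_prefix hTD hμ hce hc (hp e (List.mem_cons_of_mem _ q.start_mem_support))
    exact ih (fun x hx => hp x (List.mem_cons_of_mem _ hx)) he

end LeastBag

theorem exists_walk_support_subset_of_induce_preconnected {V : Type*} {G : SimpleGraph V}
    {S : Set V} (hS : (G.induce S).Preconnected) {a b : V} (ha : a ∈ S) (hb : b ∈ S) :
    ∃ p : G.Walk a b, ∀ x ∈ p.support, x ∈ S := by
  obtain ⟨q⟩ := hS ⟨a, ha⟩ ⟨b, hb⟩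
  refine ⟨q.map (SimpleGraph.Embedding.induce S).toHom, fun x hx => ?_⟩
  obtain ⟨y, -, rfl⟩ := List.mem_map.1 ((SimpleGraph.Walk.support_map _ q) ▸ hx)
  exact y.2

theorem stmt_10_general {V : Type*} (G : SimpleGraph V)
    (T : Finset (List ℕ)) (bag : List ℕ → Finset V)
    (hTD : IsTreeDecomp G T bag) (hstrict : IsStrict G T bag)
    (μ : V → List ℕ)
    (hμ : ∀ a : V, μ a ∈ T ∧ a ∈ bag (μ a) ∧ ∀ u ∈ T, a ∈ bag u → μ a <+: u)
    (a b : V) (ha : μ a ≠ []) :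
    ((μ a).length ≤ (μ b).length ∧
      ∃ p : G.Walk a b, ∀ x ∈ p.support, (μ a).length ≤ (μ x).length)
    ↔ μ a <+: μ b := by
  constructor
  · rintro ⟨-, p, hp⟩
    exact prefix_of_walk_of_prefix hTD (fun x => (hμ x).2.2) p hp List.prefix_rfl
  · intro hab
    have hconn := hstrict.2 (μ a) (hμ a).1 ha
    obtain ⟨p, hp⟩ := exists_walk_support_subset_of_induce_preconnected hconn.preconnected
      ((mem_aboveSet_iff hμ).2 List.prefix_rfl) ((mem_aboveSet_iff hμ).2 hab)
    exact ⟨hab.length_le, p, fun x hx => ((mem_aboveSet_iff hμ).1 (hp x hx)).length_le⟩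

/-- Let `(U_v)_{v∈T}` be a strict tree decomposition of `G` of height
at most `n`, and let `μ a` be the minimal node whose bag contains `a`.  For vertices
`a, b` not belonging to the root component (`μ a ≠ [] ≠ μ b`):
`a ⪯' b` — i.e. `|μ a| ≤ |μ b|` and `a, b` lie in the same connected component of the
subgraph `G_{≥ |μ a|}` induced on `{x : |μ x| ≥ |μ a|}` (witnessed by a walk all of whose
vertices `x` satisfy `|μ x| ≥ |μ a|`) — holds if and only if `μ a ⪯ μ b` in `T`. -/
theorem stmt_10 {V : Type*} (G : SimpleGraph V)
    (T : Finset (List ℕ)) (bag : List ℕ → Finset V) (n : ℕ)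
    (hTD : IsTreeDecomp G T bag) (hstrict : IsStrict G T bag)
    (hh : ∀ x ∈ T, x.length < n)
    (μ : V → List ℕ)
    (hμ : ∀ a : V, μ a ∈ T ∧ a ∈ bag (μ a) ∧ ∀ u ∈ T, a ∈ bag u → μ a <+: u)
    (a b : V) (ha : μ a ≠ []) (hb : μ b ≠ []) :
    ((μ a).length ≤ (μ b).length ∧
      ∃ p : G.Walk a b, ∀ x ∈ p.support, (μ a).length ≤ (μ x).length)
    ↔ μ a <+: μ b :=
  stmt_10_general G T bag hTD hstrict μ hμ a b ha
end

section
/- Let G be a graph with a tree decomposition (U_v)_{v∈T} of width k such that T has height at most n+1, let P ⊆ T be the minimal set containing every leaf of T at level n and every vertex having at least m successors in P, and assume the complete m-ary tree m^{<n+1} does not embed into T. Then the root of T is not in P, and contracting the set F of edges from T∖P into P yields a tree decomposition of G of height at most n and width at most m(k+1) − 1, where moreover (i) every vertex of T has fewer than m F-successors, (ii) every root-to-leaf path to a level-n leaf contains at least one edge of F, and (iii) no such path contains two consecutive edges of F. -/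
open scoped Classical

/-- The closure properties defining `P`: `P` contains every leaf of `T` at level `n`,
and every vertex having at least `m` successors in `P`. -/
def PClosed (T : Finset (List ℕ)) (m n : ℕ) (P : Finset (List ℕ)) : Prop :=
  (∀ v ∈ T, v.length = n → (¬ ∃ d : ℕ, v ++ [d] ∈ T) → v ∈ P) ∧
  (∀ v ∈ T, m ≤ (T.filter fun x => (∃ d : ℕ, x = v ++ [d]) ∧ x ∈ P).card → v ∈ P)

/-- The contraction relation determined by the edge set `F` of all tree edges from
`T ∖ P` into `P` (an edge goes from a parent `x ∉ P` to a child `y ∈ P`). -/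
def FRel (T P : Finset (List ℕ)) (x y : List ℕ) : Prop :=
  x ∈ T ∧ y ∈ T ∧ (∃ d : ℕ, y = x ++ [d]) ∧ x ∉ P ∧ y ∈ P

namespace Stmt19Aux
noncomputable section

variable (T P : Finset (List ℕ))

def tag (p : List ℕ) : ℕ :=
  if p ≠ [] ∧ FRel T P p.dropLast p then p.getLastD 0 + 1 else 0

def grev : List ℕ → List ℕ
  | [] => []
  | d :: r => if FRel T P r.reverse (r.reverse ++ [d]) then grev r
      else Nat.pair (tag T P r.reverse) d :: grev r

def g (u : List ℕ) : List ℕ := (grev T P u.reverse).reverse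

@[simp] lemma g_nil : g T P [] = [] := by simp [g, grev]

lemma g_concat (p : List ℕ) (d : ℕ) :
    g T P (p ++ [d]) = if FRel T P p (p ++ [d]) then g T P p
      else g T P p ++ [Nat.pair (tag T P p) d] := by
  unfold g
  rw [List.reverse_append]
  simp only [List.reverse_cons, List.reverse_nil, List.nil_append, List.singleton_append]
  rw [grev]
  rw [List.reverse_reverse]
  split_ifs with h
  · rfl
  · simp

def rt (u : List ℕ) : List ℕ :=
  if u ≠ [] ∧ FRel T P u.dropLast u then u.dropLast else u

lemma rt_concat_of_frel {p : List ℕ} {d : ℕ} (h : FRel T P p (p ++ [d])) :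
    rt T P (p ++ [d]) = p := by
  unfold rt
  rw [if_pos ⟨by simp, by rwa [List.dropLast_concat]⟩, List.dropLast_concat]

lemma rt_of_not_mem {u : List ℕ} (h : u ∉ P) : rt T P u = u := by
  unfold rt
  split_ifs with h'
  · exact absurd h'.2.2.2.2.2 h
  · rfl

lemma rt_rt (u : List ℕ) : rt T P (rt T P u) = rt T P u := by
  by_cases h : u ≠ [] ∧ FRel T P u.dropLast u
  · rw [show rt T P u = u.dropLast from by rw [rt, if_pos h]]
    exact rt_of_not_mem T P h.2.2.2.2.1
  · rw [show rt T P u = u from by rw [rt, if_neg h]]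
    rw [show rt T P u = u from by rw [rt, if_neg h]]

lemma dropLast_concat_getLastD {l : List ℕ} (h : l ≠ []) :
    l.dropLast ++ [l.getLastD 0] = l := by
  obtain ⟨L, b, rfl⟩ := (List.eq_nil_or_concat l).resolve_left h
  simp

lemma g_rt (u : List ℕ) : g T P (rt T P u) = g T P u := by
  by_cases h : u ≠ [] ∧ FRel T P u.dropLast u
  · rw [rt, if_pos h]
    conv_rhs => rw [← dropLast_concat_getLastD h.1]
    rw [g_concat, if_pos]
    rw [dropLast_concat_getLastD h.1]; exact h.2
  · rw [rt, if_neg h]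

lemma length_g_le (u : List ℕ) : (g T P u).length ≤ u.length := by
  induction u using List.reverseRecOn with
  | nil => simp
  | append_singleton p d ih =>
    rw [g_concat]
    split_ifs
    · simp; omega
    · simp; omega

lemma length_g_lt {u x : List ℕ} (hx : x <+: u) (hne : x ≠ [])
    (hf : FRel T P x.dropLast x) : (g T P u).length < u.length := by
  induction u using List.reverseRecOn with
  | nil => exact absurd (List.prefix_nil.mp hx) hne
  | append_singleton p d ih =>
    rw [g_concat]
    rcases List.prefix_concat_iff.mp hx with h | h
    · subst h
      rw [if_pos (by rwa [List.dropLast_concat] at hf)]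
      have := length_g_le T P p
      simp only [List.length_append, List.length_singleton]
      omega
    · have := ih h
      have := length_g_le T P p
      split_ifs <;> simp <;> omega

lemma g_prefix_append (u s : List ℕ) : g T P u <+: g T P (u ++ s) := by
  induction s using List.reverseRecOn with
  | nil => simp
  | append_singleton s d ih =>
    rw [← List.append_assoc, g_concat]
    split_ifs
    · exact ih
    · exact ih.trans (List.prefix_append _ _)

lemma g_mono {u v : List ℕ} (h : u <+: v) : g T P u <+: g T P v := by
  obtain ⟨s, rfl⟩ := h; exact g_prefix_append T P u s

lemma g_take_exists {u w : List ℕ} (h : w <+: g T P u) :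
    ∃ i ≤ u.length, g T P (u.take i) = w := by
  induction u using List.reverseRecOn with
  | nil => exact ⟨0, by simp, by simpa using (List.prefix_nil.mp (by simpa using h)).symm⟩
  | append_singleton p d ih =>
    rw [g_concat] at h
    split_ifs at h with hF
    · obtain ⟨i, hi, hg⟩ := ih h
      exact ⟨i, by simp; omega, by rwa [List.take_append_of_le_length hi]⟩
    · rcases List.prefix_concat_iff.mp h with h | h
      · refine ⟨(p ++ [d]).length, le_refl _, ?_⟩
        rw [List.take_length, g_concat, if_neg hF, h]
      · obtain ⟨i, hi, hg⟩ := ih h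
        exact ⟨i, by simp; omega, by rwa [List.take_append_of_le_length hi]⟩

lemma g_eq_imp_rt_eq : ∀ N u u', u.length + u'.length ≤ N →
    g T P u = g T P u' → rt T P u = rt T P u' := by
  intro N
  induction N with
  | zero =>
    intro u u' hlen _
    obtain rfl : u = [] := List.eq_nil_of_length_eq_zero (by omega)
    obtain rfl : u' = [] := List.eq_nil_of_length_eq_zero (by omega)
    rfl
  | succ N ih =>
    intro u u' hlen hg
    by_cases hCu : u ≠ [] ∧ FRel T P u.dropLast u
    · have hul : 1 ≤ u.length := List.length_pos_iff.mpr hCu.1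
      have h1 : g T P u.dropLast = g T P u' := by
        rw [← hg, ← g_rt T P u, rt, if_pos hCu]
      have h2 := ih u.dropLast u' (by rw [List.length_dropLast]; omega) h1
      rw [rt_of_not_mem T P hCu.2.2.2.2.1] at h2
      rw [rt, if_pos hCu, h2]
    · by_cases hCu' : u' ≠ [] ∧ FRel T P u'.dropLast u'
      · have hul : 1 ≤ u'.length := List.length_pos_iff.mpr hCu'.1
        have h1 : g T P u = g T P u'.dropLast := by
          rw [hg, ← g_rt T P u', rt, if_pos hCu']
        have h2 := ih u u'.dropLast (by rw [List.length_dropLast]; omega) h1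
        rw [rt_of_not_mem T P hCu'.2.2.2.2.1] at h2
        rw [show rt T P u' = u'.dropLast from by rw [rt, if_pos hCu']]
        exact h2
      · rw [rt, if_neg hCu, rt, if_neg hCu']
        rcases List.eq_nil_or_concat u with rfl | ⟨p, d, rfl⟩
        · rcases List.eq_nil_or_concat u' with rfl | ⟨p', d', rfl⟩
          · rfl
          · exfalso
            simp only [List.concat_eq_append] at hCu' hg
            have hF' : ¬ FRel T P p' (p' ++ [d']) := fun hf => hCu' ⟨by simp, by rwa [List.dropLast_concat]⟩
            rw [g_concat, if_neg hF'] at hg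
            simp at hg
        · rcases List.eq_nil_or_concat u' with rfl | ⟨p', d', rfl⟩
          · exfalso
            simp only [List.concat_eq_append] at hCu hg
            have hF : ¬ FRel T P p (p ++ [d]) := fun hf => hCu ⟨by simp, by rwa [List.dropLast_concat]⟩
            rw [g_concat, if_neg hF] at hg
            simp at hg
          · simp only [List.concat_eq_append] at hCu hCu' hg hlen ⊢
            have hF : ¬ FRel T P p (p ++ [d]) := fun hf => hCu ⟨by simp, by rwa [List.dropLast_concat]⟩
            have hF' : ¬ FRel T P p' (p' ++ [d']) := fun hf => hCu' ⟨by simp, by rwa [List.dropLast_concat]⟩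
            rw [g_concat, if_neg hF, g_concat, if_neg hF'] at hg
            obtain ⟨hgp, hpair⟩ := List.append_inj' hg (by simp)
            simp only [List.cons.injEq] at hpair
            obtain ⟨htag, hd⟩ := Nat.pair_eq_pair.mp hpair.1
            simp only [List.length_append, List.length_singleton] at hlen
            have hrt := ih p p' (by omega) hgp
            by_cases hCp : p ≠ [] ∧ FRel T P p.dropLast p
            · by_cases hCp' : p' ≠ [] ∧ FRel T P p'.dropLast p'
              · rw [tag, if_pos hCp, tag, if_pos hCp'] at htag
                rw [rt, if_pos hCp, rt, if_pos hCp'] at hrt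
                have hgl : p.getLastD 0 = p'.getLastD 0 := by omega
                have hpp : p = p' := by
                  rw [← dropLast_concat_getLastD hCp.1, ← dropLast_concat_getLastD hCp'.1, hrt,
                    hgl]
                rw [hpp, hd]
              · rw [tag, if_pos hCp, tag, if_neg hCp'] at htag
                omega
            · by_cases hCp' : p' ≠ [] ∧ FRel T P p'.dropLast p'
              · rw [tag, if_neg hCp, tag, if_pos hCp'] at htag
                omega
              · rw [rt, if_neg hCp, rt, if_neg hCp'] at hrt
                rw [hrt, hd]

lemma g_eq_iff_rt_eq (u u' : List ℕ) :
    g T P u = g T P u' ↔ rt T P u = rt T P u' := by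
  constructor
  · exact g_eq_imp_rt_eq T P (u.length + u'.length) u u' le_rfl
  · intro h
    rw [← g_rt T P u, ← g_rt T P u', h]

lemma rt_eq_of_frel {x y : List ℕ} (h : FRel T P x y) : rt T P x = rt T P y := by
  obtain ⟨hxT, hyT, ⟨d, rfl⟩, hxP, hyP⟩ := h
  rw [rt_of_not_mem T P hxP, rt_concat_of_frel T P ⟨hxT, hyT, ⟨d, rfl⟩, hxP, hyP⟩]

lemma eqvgen_iff_rt (u u' : List ℕ) :
    Relation.EqvGen (FRel T P) u u' ↔ rt T P u = rt T P u' := by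
  constructor
  · intro h
    induction h with
    | rel x y h => exact rt_eq_of_frel T P h
    | refl x => rfl
    | symm x y _ ih => exact ih.symm
    | trans x y z _ _ ih1 ih2 => exact ih1.trans ih2
  · intro h
    have key : ∀ v, Relation.EqvGen (FRel T P) v (rt T P v) := by
      intro v
      by_cases hC : v ≠ [] ∧ FRel T P v.dropLast v
      · rw [rt, if_pos hC]
        exact Relation.EqvGen.symm _ _ (Relation.EqvGen.rel _ _ hC.2)
      · rw [rt, if_neg hC]
        exact Relation.EqvGen.refl v
    exact Relation.EqvGen.trans _ _ _ (h ▸ key u) (Relation.EqvGen.symm _ _ (key u'))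

lemma fiber_subset (u : List ℕ) :
    T.filter (fun x => g T P x = g T P u) ⊆
      insert (rt T P u)
        (T.filter fun x => (∃ d : ℕ, x = rt T P u ++ [d]) ∧ rt T P u ∉ P ∧ x ∈ P) := by
  intro x hx
  simp only [Finset.mem_filter] at hx
  have hrt : rt T P x = rt T P u := (g_eq_iff_rt_eq T P x u).mp hx.2
  by_cases hC : x ≠ [] ∧ FRel T P x.dropLast x
  · have hx_eq : x = rt T P u ++ [x.getLastD 0] := by
      rw [← hrt, rt, if_pos hC, dropLast_concat_getLastD hC.1]
    refine Finset.mem_insert_of_mem (Finset.mem_filter.mpr ⟨hx.1, ⟨_, hx_eq⟩, ?_, hC.2.2.2.2.2⟩)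
    rw [← hrt, rt, if_pos hC]
    exact hC.2.2.2.2.1
  · rw [rt, if_neg hC] at hrt
    exact hrt ▸ Finset.mem_insert_self _ _

def EmbAbove (T : Finset (List ℕ)) (m h : ℕ) (v : List ℕ) : Prop :=
  ∃ f : List (Fin m) → List ℕ, f [] = v ∧
    (∀ x : List (Fin m), x.length < h → f x ∈ T) ∧
    (∀ x y : List (Fin m), x.length < h → y.length < h → (x <+: y ↔ f x <+: f y))

lemma emb_of_mem_P {T P : Finset (List ℕ)} {m n : ℕ}
    (hh : ∀ x ∈ T, x.length < n + 1)
    (hPclosed : PClosed T m n P)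
    (hPmin : ∀ Q, PClosed T m n Q → P ⊆ Q) :
    ∀ v ∈ P, EmbAbove T m (n + 1 - v.length) v := by
  have hQ : PClosed T m n (P.filter fun v => EmbAbove T m (n + 1 - v.length) v) := by
    constructor
    · intro v hvT hvn hleaf
      refine Finset.mem_filter.mpr ⟨hPclosed.1 v hvT hvn hleaf, ?_⟩
      refine ⟨fun _ => v, rfl, fun x hx => hvT, fun x y hx hy => ?_⟩
      have hxn : x = [] := List.eq_nil_of_length_eq_zero (by omega)
      have hyn : y = [] := List.eq_nil_of_length_eq_zero (by omega)
      subst hxn; subst hyn; simp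
    · intro v hvT hm
      have hvP : v ∈ P := hPclosed.2 v hvT (le_trans hm (Finset.card_le_card (by
        intro x hx
        simp only [Finset.mem_filter] at hx ⊢
        exact ⟨hx.1, hx.2.1, hx.2.2.1⟩)))
      refine Finset.mem_filter.mpr ⟨hvP, ?_⟩
      rcases Nat.eq_zero_or_pos m with rfl | hm1
      · refine ⟨fun _ => v, rfl, fun x hx => hvT, fun x y hx hy => ?_⟩
        have hxn : x = [] := by cases x with | nil => rfl | cons i _ => exact i.elim0
        have hyn : y = [] := by cases y with | nil => rfl | cons i _ => exact i.elim0
        subst hxn; subst hyn; simp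
      obtain ⟨C', hC'sub, hC'card⟩ := Finset.exists_subset_card_eq hm
      have hC'mem : ∀ x ∈ C', x ∈ T ∧ (∃ d : ℕ, x = v ++ [d]) ∧ x ∈ P ∧
          EmbAbove T m (n + 1 - x.length) x := by
        intro x hx
        have := hC'sub hx
        simp only [Finset.mem_filter] at this
        exact ⟨this.1, this.2.1, this.2.2.1, this.2.2.2⟩
      set e := C'.equivFin with he
      set w : Fin m → List ℕ := fun i => (e.symm (Fin.cast hC'card.symm i) : List ℕ) with hwdef
      have hwC' : ∀ i, w i ∈ C' := fun i => (e.symm _).2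
      have hwinj : Function.Injective w := by
        intro i j hij
        have h2 := e.symm.injective (Subtype.ext hij)
        exact Fin.ext (by simpa using congrArg Fin.val h2)
      have hwd : ∀ i, ∃ d : ℕ, w i = v ++ [d] := fun i => (hC'mem _ (hwC' i)).2.1
      have hwlen : ∀ i, (w i).length = v.length + 1 := by
        intro i
        obtain ⟨d, hd⟩ := hwd i
        simp [hd]
      have hwT : ∀ i, w i ∈ T := fun i => (hC'mem _ (hwC' i)).1
      have hlt : v.length < n := by
        have := hh _ (hwT ⟨0, hm1⟩)
        rw [hwlen] at this
        omega
      have harith : ∀ i, n + 1 - (w i).length = n - v.length := by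
        intro i; rw [hwlen]; omega
      choose fi h0 h1 h2 using fun i => (hC'mem _ (hwC' i)).2.2.2
      have h1' : ∀ i (x : List (Fin m)), x.length < n - v.length → fi i x ∈ T :=
        fun i x hx => h1 i x (by rw [harith i]; exact hx)
      have h2' : ∀ i (x y : List (Fin m)), x.length < n - v.length →
          y.length < n - v.length → (x <+: y ↔ fi i x <+: fi i y) :=
        fun i x y hx hy => h2 i x y (by rw [harith i]; exact hx) (by rw [harith i]; exact hy)
      have h'pos : 0 < n - v.length := by omega
      have hwpre : ∀ i (x : List (Fin m)), x.length < n - v.length → w i <+: fi i x := by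
        intro i x hx
        have := (h2' i [] x (by simpa using h'pos) hx).mp List.nil_prefix
        rwa [h0 i] at this
      have hvw : ∀ i, v <+: w i := by
        intro i; obtain ⟨d, hd⟩ := hwd i; rw [hd]; exact List.prefix_append v [d]
      have hwne : ∀ i j : Fin m, i ≠ j → w i ≠ w j := fun i j h hc => h (hwinj hc)
      refine ⟨fun x => match x with | [] => v | i :: x' => fi i x', rfl, ?_, ?_⟩
      · intro x hx
        match x with
        | [] => exact hvT
        | i :: x' =>
          refine h1' i x' ?_
          simp only [List.length_cons] at hx
          omega
      · intro x y hx hy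
        match x, y with
        | [], [] =>
          show ([] : List (Fin m)) <+: [] ↔ v <+: v
          simp
        | [], j :: y' =>
          show [] <+: j :: y' ↔ v <+: fi j y'
          refine iff_of_true List.nil_prefix ((hvw j).trans (hwpre j y' ?_))
          simp only [List.length_cons] at hy; omega
        | i :: x', [] =>
          show i :: x' <+: [] ↔ fi i x' <+: v
          refine iff_of_false (by simp) fun hc => ?_
          have hx' : x'.length < n - v.length := by
            simp only [List.length_cons] at hx; omega
          have hle := hc.length_le
          have := ((hwpre i x' hx').trans hc).length_le
          rw [hwlen] at this
          omega
        | i :: x', j :: y' =>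
          have hx' : x'.length < n - v.length := by
            simp only [List.length_cons] at hx; omega
          have hy' : y'.length < n - v.length := by
            simp only [List.length_cons] at hy; omega
          show i :: x' <+: j :: y' ↔ fi i x' <+: fi j y'
          by_cases hij : i = j
          · subst hij
            rw [List.cons_prefix_cons]
            simp only [true_and]
            exact h2' i x' y' hx' hy'
          · refine iff_of_false (fun hc => hij (List.cons_prefix_cons.mp hc).1) fun hc => ?_
            have hwi : w i <+: fi j y' := (hwpre i x' hx').trans hc
            have hwj : w j <+: fi j y' := hwpre j y' hy'
            have : w i <+: w j :=
              List.prefix_of_prefix_length_le hwi hwj (by rw [hwlen, hwlen])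
            exact hwne i j hij (this.eq_of_length (by rw [hwlen, hwlen]))
  intro v hv
  exact (Finset.mem_filter.mp (hPmin _ hQ hv)).2
end
end Stmt19Aux


/-- Let `G` have a tree decomposition `(U_v)_{v∈T}` of width `k`
(`|U_v| ≤ k+1`) and height at most `n+1`, let `P ⊆ T` be the minimal set containing
every leaf of `T` at level `n` and every vertex with at least `m` successors in `P`,
and assume the complete `m`-ary tree `m^{<n+1}` does not embed into `T`.  Then the root
of `T` is not in `P`; moreover, letting `F` be the set of tree edges from `T ∖ P` into
`P`: (i) every vertex of `T` has fewer than `m` `F`-successors, (ii) every root-to-leaf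
path to a level-`n` leaf contains at least one edge of `F`, (iii) no such path contains
two consecutive edges of `F`, and contracting the edges of `F` (via a quotient map `g`
identifying exactly the `F`-equivalence classes and merging the corresponding bags)
yields a tree decomposition of `G` of height at most `n` and width at most
`m·(k+1) − 1`. -/
theorem stmt_19 {V : Type*} [Fintype V] (G : SimpleGraph V) (n k m : ℕ)
    (T : Finset (List ℕ)) (bag : List ℕ → Finset V)
    (hroot : ([] : List ℕ) ∈ T)
    (hTD : IsTreeDecomp G T bag)
    (hw : ∀ x ∈ T, (bag x).card ≤ k + 1)
    (hh : ∀ x ∈ T, x.length < n + 1)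
    (P : Finset (List ℕ)) (hPsub : P ⊆ T)
    (hPclosed : PClosed T m n P)
    (hPmin : ∀ Q : Finset (List ℕ), PClosed T m n Q → P ⊆ Q)
    (hemb : ¬ EmbedsCompleteTree m (n + 1) T) :
    ([] : List ℕ) ∉ P ∧
    (∀ u ∈ T, (T.filter fun x => (∃ d : ℕ, x = u ++ [d]) ∧ u ∉ P ∧ x ∈ P).card < m) ∧
    (∀ v ∈ T, v.length = n →
      ∃ x : List ℕ, x <+: v ∧ x ≠ [] ∧ x ∈ P ∧ x.dropLast ∉ P) ∧
    (∀ u ∈ T, ∀ d d' : ℕ, u ++ [d] ∈ T → u ++ [d] ++ [d'] ∈ T →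
      ¬ ((u ∉ P ∧ u ++ [d] ∈ P) ∧ (u ++ [d] ∉ P ∧ u ++ [d] ++ [d'] ∈ P))) ∧
    (∃ (T' : Finset (List ℕ)) (bag' : List ℕ → Finset V) (g : List ℕ → List ℕ),
      IsTreeDecomp G T' bag' ∧
      (∀ v ∈ T', v.length < n) ∧
      (∀ v ∈ T', (bag' v).card ≤ m * (k + 1)) ∧
      (∀ u ∈ T, g u ∈ T') ∧ (∀ v ∈ T', ∃ u ∈ T, g u = v) ∧ g [] = [] ∧
      (∀ u ∈ T, ∀ u' ∈ T, (g u = g u' ↔ Relation.EqvGen (FRel T P) u u')) ∧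
      (∀ u ∈ T, ∀ d : ℕ, u ++ [d] ∈ T → ¬ FRel T P u (u ++ [d]) →
        ∃ d' : ℕ, g (u ++ [d]) = g u ++ [d']) ∧
      (∀ v ∈ T', ∀ a : V, a ∈ bag' v ↔ ∃ u ∈ T, g u = v ∧ a ∈ bag u)) := by
  classical
  have hm1 : 0 < m := by
    rcases Nat.eq_zero_or_pos m with rfl | h
    · exfalso
      apply hemb
      refine ⟨fun _ => [], fun x hx => hroot, fun x y hx hy _ => ?_, fun x y hx hy => ?_⟩
      · cases x with
        | nil => cases y with
          | nil => rfl
          | cons i _ => exact i.elim0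
        | cons i _ => exact i.elim0
      · have hxn : x = [] := by cases x with | nil => rfl | cons i _ => exact i.elim0
        have hyn : y = [] := by cases y with | nil => rfl | cons i _ => exact i.elim0
        subst hxn; subst hyn; simp
    · exact h
  have hrootP : ([] : List ℕ) ∉ P := by
    intro hmem
    apply hemb
    obtain ⟨f, hf0, hf1, hf2⟩ := Stmt19Aux.emb_of_mem_P hh hPclosed hPmin [] hmem
    simp only [List.length_nil, Nat.sub_zero] at hf1 hf2
    refine ⟨f, hf1, ?_, hf2⟩
    intro x y hx hy hxy
    have h1 : f x <+: f y := by rw [hxy]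
    have h2 : f y <+: f x := by rw [hxy]
    have hxy' : x <+: y := (hf2 x y hx hy).mpr h1
    have hyx' : y <+: x := (hf2 y x hy hx).mpr h2
    exact hxy'.eq_of_length (le_antisymm hxy'.length_le hyx'.length_le)
  have claim2 : ∀ u ∈ T,
      (T.filter fun x => (∃ d : ℕ, x = u ++ [d]) ∧ u ∉ P ∧ x ∈ P).card < m := by
    intro u huT
    by_cases huP : u ∈ P
    · have hemp : (T.filter fun x => (∃ d : ℕ, x = u ++ [d]) ∧ u ∉ P ∧ x ∈ P) = ∅ := by
        refine Finset.filter_false_of_mem fun x hx => ?_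
        rintro ⟨_, hcontra, _⟩
        exact hcontra huP
      rw [hemp]
      simpa using hm1
    · by_contra hge
      push_neg at hge
      apply huP
      apply hPclosed.2 u huT
      refine le_trans hge (le_of_eq ?_)
      congr 1
      apply Finset.filter_congr
      intro x hx
      simp [huP]
  have claim3 : ∀ v ∈ T, v.length = n →
      ∃ x : List ℕ, x <+: v ∧ x ≠ [] ∧ x ∈ P ∧ x.dropLast ∉ P := by
    intro v hvT hvn
    have hvP : v ∈ P := by
      apply hPclosed.1 v hvT hvn
      rintro ⟨d, hd⟩
      have := hh _ hd
      simp [hvn] at this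
    have hne : (P.filter (· <+: v)).Nonempty :=
      ⟨v, Finset.mem_filter.mpr ⟨hvP, List.prefix_rfl⟩⟩
    obtain ⟨x, hx, hmin⟩ := Finset.exists_min_image _ List.length hne
    simp only [Finset.mem_filter] at hx
    have hxne : x ≠ [] := by rintro rfl; exact hrootP hx.1
    refine ⟨x, hx.2, hxne, hx.1, ?_⟩
    intro hdp
    have hdle := hmin x.dropLast
      (Finset.mem_filter.mpr ⟨hdp, (List.dropLast_prefix x).trans hx.2⟩)
    rw [List.length_dropLast] at hdle
    have hpos : 1 ≤ x.length := List.length_pos_iff.mpr hxne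
    omega
  refine ⟨hrootP, claim2, claim3, fun u _ d d' _ _ h => h.2.1 h.1.2, ?_⟩
  set g := Stmt19Aux.g T P with hgdef
  have hbag'mem : ∀ (v : List ℕ) (a : V),
      a ∈ (T.filter fun u => g u = v).biUnion bag ↔ ∃ u ∈ T, g u = v ∧ a ∈ bag u := by
    intro v a
    simp only [Finset.mem_biUnion, Finset.mem_filter]
    constructor
    · rintro ⟨u, ⟨h1, h2⟩, h3⟩; exact ⟨u, h1, h2, h3⟩
    · rintro ⟨u, h1, h2, h3⟩; exact ⟨u, ⟨h1, h2⟩, h3⟩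
  refine ⟨T.image g, fun v => (T.filter fun u => g u = v).biUnion bag, g, ?_, ?_, ?_,
    fun u hu => Finset.mem_image.mpr ⟨u, hu, rfl⟩,
    fun v hv => by obtain ⟨u, hu, h⟩ := Finset.mem_image.mp hv; exact ⟨u, hu, h⟩,
    Stmt19Aux.g_nil T P,
    fun u hu u' hu' =>
      (Stmt19Aux.g_eq_iff_rt_eq T P u u').trans (Stmt19Aux.eqvgen_iff_rt T P u u').symm,
    fun u hu d hd hF =>
      ⟨Nat.pair (Stmt19Aux.tag T P u) d, by rw [hgdef, Stmt19Aux.g_concat, if_neg hF]⟩,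
    fun v hv a => hbag'mem v a⟩
  · constructor
    · intro x hx y hy
      obtain ⟨u, huT, rfl⟩ := Finset.mem_image.mp hx
      obtain ⟨i, hi, hgi⟩ := Stmt19Aux.g_take_exists T P hy
      exact Finset.mem_image.mpr ⟨u.take i, hTD.prefix_closed u huT _ (List.take_prefix i u), hgi⟩
    · intro a
      obtain ⟨r, hrS, hr⟩ := hTD.vertex_conn a
      have hgrmem : g r ∈ T.image g ∧ a ∈ (T.filter fun u => g u = g r).biUnion bag :=
        ⟨Finset.mem_image.mpr ⟨r, hrS.1, rfl⟩,
          Finset.mem_biUnion.mpr ⟨r, Finset.mem_filter.mpr ⟨hrS.1, rfl⟩, hrS.2⟩⟩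
      refine ⟨g r, hgrmem, ?_⟩
      rintro v ⟨hvT', hva⟩
      obtain ⟨u, huT, hgu, hab⟩ := (hbag'mem v a).mp hva
      have huS : u ∈ {w | w ∈ T ∧ a ∈ bag w} := ⟨huT, hab⟩
      have hru : r <+: u := (hr u huS).1
      constructor
      · rw [← hgu]
        exact Stmt19Aux.g_mono T P hru
      · intro w hw1 hw2
        rw [← hgu] at hw2
        obtain ⟨i, hi, rfl⟩ := Stmt19Aux.g_take_exists T P hw2
        simp only [← hgdef] at hw1 hw2 ⊢
        rcases le_total (u.take i).length r.length with hle | hle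
        · have h1 : u.take i <+: r :=
            List.prefix_of_prefix_length_le (List.take_prefix i u) hru hle
          have h2 : g (u.take i) <+: g r := Stmt19Aux.g_mono T P h1
          have heq : g (u.take i) = g r :=
            h2.eq_of_length (le_antisymm h2.length_le hw1.length_le)
          rw [heq]
          exact hgrmem
        · have h1 : r <+: u.take i :=
            List.prefix_of_prefix_length_le hru (List.take_prefix i u) hle
          have h3 := (hr u huS).2 (u.take i) h1 (List.take_prefix i u)
          exact ⟨Finset.mem_image.mpr ⟨u.take i, h3.1, rfl⟩,
            Finset.mem_biUnion.mpr ⟨u.take i, Finset.mem_filter.mpr ⟨h3.1, rfl⟩, h3.2⟩⟩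
    · intro a b hab
      obtain ⟨v, hvT, ha, hb⟩ := hTD.edge_cover a b hab
      exact ⟨g v, Finset.mem_image.mpr ⟨v, hvT, rfl⟩,
        Finset.mem_biUnion.mpr ⟨v, Finset.mem_filter.mpr ⟨hvT, rfl⟩, ha⟩,
        Finset.mem_biUnion.mpr ⟨v, Finset.mem_filter.mpr ⟨hvT, rfl⟩, hb⟩⟩
  · intro v hv
    obtain ⟨u, huT, rfl⟩ := Finset.mem_image.mp hv
    by_cases hun : u.length = n
    · obtain ⟨x, hxp, hxne, hxP, hxdP⟩ := claim3 u huT hun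
      have hF : FRel T P x.dropLast x :=
        ⟨hTD.prefix_closed u huT _ ((List.dropLast_prefix x).trans hxp),
          hTD.prefix_closed u huT _ hxp,
          ⟨x.getLastD 0, (Stmt19Aux.dropLast_concat_getLastD hxne).symm⟩, hxdP, hxP⟩
      have hglt := Stmt19Aux.length_g_lt T P hxp hxne hF
      rw [← hgdef] at hglt
      omega
    · have := hh u huT
      have hgle := Stmt19Aux.length_g_le T P u
      rw [← hgdef] at hgle
      omega
  · intro v hv
    obtain ⟨u, huT, rfl⟩ := Finset.mem_image.mp hv
    have hrtT : Stmt19Aux.rt T P u ∈ T := by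
      unfold Stmt19Aux.rt
      split_ifs
      · exact hTD.prefix_closed u huT _ (List.dropLast_prefix u)
      · exact huT
    have hlt := claim2 _ hrtT
    have hcard : (T.filter fun x => g x = g u).card ≤ m := by
      refine le_trans (Finset.card_le_card (Stmt19Aux.fiber_subset T P u)) ?_
      refine le_trans (Finset.card_insert_le _ _) ?_
      omega
    calc ((T.filter fun x => g x = g u).biUnion bag).card
        ≤ ∑ x ∈ T.filter fun x => g x = g u, (bag x).card := Finset.card_biUnion_le
      _ ≤ (T.filter fun x => g x = g u).card * (k + 1) := by
          simpa using Finset.sum_le_card_nsmul _ _ (k + 1)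
            fun x hx => hw x (Finset.mem_filter.mp hx).1
      _ ≤ m * (k + 1) := Nat.mul_le_mul_right _ hcard
end
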